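/- arXiv:1210.1810 — 5 statements merged into one kernel-verified Lean document; each statement's English description precedes it below -/
import Mathlib

section
/- Let ε, δ, η, β > 0 and let m be a positive integer such that exp(−2β²δm) < ε/2. Let X = (X_1, …, X_m) be a random variable taking values in {0,1}^m with Pr(Σ_{i=1}^m X_i ≤ ηm) ≥ ε, and let G ⊆ {0,1}^m be a set with Pr(X ∈ G) ≥ ε/2 such that for every x ∈ G at least a (1−δ) fraction of indices i satisfy Pr(X_i = 0 | X_{<i} = x_{<i}) ≥ 1 − η − β. Then for at least a (1−2δ) fraction of the indices i ∈ {1,…,m} there exists a subset G_i ⊆ G with Pr(X ∈ G_i | X ∈ G) ≥ 1/2 such that every x ∈ G_i satisfies Pr(X_i = 0 | X_{<i} = x_{<i}) ≥ 1 − η − β. -/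
/-!
An averaging argument. For each index `i`, let `Bᵢ ⊆ G` be the strings of `G` that are good at
`i`. Double counting gives `∑ᵢ Pr(Bᵢ) ≥ (1 - δ) m Pr(G)`, while each `Pr(Bᵢ) ≤ Pr(G)`; so if more
than `2δm` indices had `Pr(Bᵢ) < Pr(G)/2`, the sum would fall short. Taking `Gᵢ = Bᵢ` for the
remaining indices proves the claim.
-/

open scoped Classical BigOperators

/-- The probability that the random string distributed according to `p` agrees with `x`
on all coordinates before `i`. -/
noncomputable def prefProb {m : ℕ} (p : (Fin m → Bool) → ℝ) (x : Fin m → Bool) (i : Fin m) : ℝ :=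
  ∑ y ∈ Finset.univ.filter (fun y : Fin m → Bool => ∀ j : Fin m, j < i → y j = x j), p y

/-- The conditional probability `Pr(X_i = 0 | X_{<i} = x_{<i})` under the distribution `p`. -/
noncomputable def condZeroProb {m : ℕ} (p : (Fin m → Bool) → ℝ) (x : Fin m → Bool)
    (i : Fin m) : ℝ :=
  (∑ y ∈ Finset.univ.filter
      (fun y : Fin m → Bool => (∀ j : Fin m, j < i → y j = x j) ∧ y i = false), p y)
    / prefProb p x i

open Finset

section Averaging

variable {ι α : Type*} [Fintype ι]

theorem sum_sum_filter_eq_sum_mul_card_filter (G : Finset α) (w : α → ℝ) (P : ι → α → Prop) :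
    ∑ i, ∑ x ∈ G.filter (P i), w x = ∑ x ∈ G, w x * (univ.filter (fun i => P i x)).card := by
  simp only [sum_filter]
  rw [sum_comm]
  refine sum_congr rfl fun x _ => ?_
  rw [← sum_filter, sum_const, nsmul_eq_mul, mul_comm]

theorem card_filter_half_le_of_sum_le {f : ι → ℝ} {W δ : ℝ} (hW : 0 < W) (hf : ∀ i, f i ≤ W)
    (hsum : (1 - δ) * Fintype.card ι * W ≤ ∑ i, f i) :
    (1 - 2 * δ) * Fintype.card ι ≤ (univ.filter (fun i => W / 2 ≤ f i)).card := by
  have hpointwise : ∀ i, f i ≤ W / 2 + if W / 2 ≤ f i then W / 2 else 0 := fun i => by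
    split_ifs <;> linarith [hf i]
  have hupper : ∑ i, f i ≤ (Fintype.card ι + (univ.filter (fun i => W / 2 ≤ f i)).card) * (W / 2) :=
    calc ∑ i, f i ≤ ∑ i, (W / 2 + if W / 2 ≤ f i then W / 2 else 0) :=
          sum_le_sum fun i _ => hpointwise i
      _ = _ := by
          rw [sum_add_distrib, ← sum_filter, sum_const, sum_const, card_univ]
          simp only [nsmul_eq_mul]
          ring
  nlinarith

theorem card_filter_half_le_sum_filter (G : Finset α) (w : α → ℝ) (hw : ∀ x ∈ G, 0 ≤ w x)
    (hG : 0 < ∑ x ∈ G, w x) (P : ι → α → Prop) (δ : ℝ)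
    (hgood : ∀ x ∈ G, (1 - δ) * Fintype.card ι ≤ (univ.filter (fun i => P i x)).card) :
    (1 - 2 * δ) * Fintype.card ι ≤
      (univ.filter (fun i => (∑ x ∈ G, w x) / 2 ≤ ∑ x ∈ G.filter (P i), w x)).card := by
  refine card_filter_half_le_of_sum_le hG
    (fun i => sum_le_sum_of_subset_of_nonneg (filter_subset _ _) fun x hx _ => hw x hx) ?_
  calc (1 - δ) * Fintype.card ι * ∑ x ∈ G, w x = ∑ x ∈ G, w x * ((1 - δ) * Fintype.card ι) := by
        rw [← sum_mul, mul_comm]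
    _ ≤ ∑ x ∈ G, w x * (univ.filter (fun i => P i x)).card :=
        sum_le_sum fun x hx => mul_le_mul_of_nonneg_left (hgood x hx) (hw x hx)
    _ = _ := (sum_sum_filter_eq_sum_mul_card_filter G w P).symm

end Averaging

theorem stmt1_general {m : ℕ} (ε δ η β : ℝ)
    (hε : 0 < ε)
    (p : (Fin m → Bool) → ℝ) (hp0 : ∀ x, 0 ≤ p x)
    (G : Finset (Fin m → Bool))
    (hG : ε / 2 ≤ ∑ x ∈ G, p x)
    (hGgood : ∀ x ∈ G, (1 - δ) * m ≤
        ((Finset.univ.filter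
          (fun i : Fin m => 1 - η - β ≤ condZeroProb p x i)).card : ℝ)) :
    (1 - 2 * δ) * m ≤
      ((Finset.univ.filter (fun i : Fin m =>
        ∃ Gi : Finset (Fin m → Bool), Gi ⊆ G ∧
          1 / 2 ≤ (∑ x ∈ Gi, p x) / (∑ x ∈ G, p x) ∧
          ∀ x ∈ Gi, 1 - η - β ≤ condZeroProb p x i)).card : ℝ) := by
  have hGpos : 0 < ∑ x ∈ G, p x := by linarith
  have hhalf := card_filter_half_le_sum_filter G p (fun x _ => hp0 x) hGpos
    (fun i x => 1 - η - β ≤ condZeroProb p x i) δ (by simpa using hGgood)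
  rw [Fintype.card_fin] at hhalf
  refine hhalf.trans (Nat.cast_le.mpr (card_le_card fun i hi => ?_))
  simp only [mem_filter, mem_univ, true_and] at hi ⊢
  refine ⟨G.filter (fun x => 1 - η - β ≤ condZeroProb p x i), filter_subset _ _, ?_,
    fun x hx => (mem_filter.mp hx).2⟩
  rw [le_div_iff₀ hGpos]
  linarith

theorem stmt1 {m : ℕ} (hm : 0 < m) (ε δ η β : ℝ)
    (hε : 0 < ε) (hδ : 0 < δ) (hη : 0 < η) (hβ : 0 < β)
    (hexp : Real.exp (-2 * β ^ 2 * δ * m) < ε / 2)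
    (p : (Fin m → Bool) → ℝ) (hp0 : ∀ x, 0 ≤ p x) (hp1 : ∑ x, p x = 1)
    (hbig : ε ≤ ∑ x ∈ Finset.univ.filter
        (fun x : Fin m → Bool =>
          ((Finset.univ.filter (fun i : Fin m => x i = true)).card : ℝ) ≤ η * m), p x)
    (G : Finset (Fin m → Bool))
    (hG : ε / 2 ≤ ∑ x ∈ G, p x)
    (hGgood : ∀ x ∈ G, (1 - δ) * m ≤
        ((Finset.univ.filter
          (fun i : Fin m => 1 - η - β ≤ condZeroProb p x i)).card : ℝ)) :
    (1 - 2 * δ) * m ≤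
      ((Finset.univ.filter (fun i : Fin m =>
        ∃ Gi : Finset (Fin m → Bool), Gi ⊆ G ∧
          1 / 2 ≤ (∑ x ∈ Gi, p x) / (∑ x ∈ G, p x) ∧
          ∀ x ∈ Gi, 1 - η - β ≤ condZeroProb p x i)).card : ℝ) :=
  stmt1_general ε δ η β hε p hp0 G hG hGgood
end

section
/- Let m be a positive integer, C ⊆ {1,…,m} a nonempty subset, z ∈ {0,1}^m a fixed string, η ∈ (0,1), and γ ∈ (0,1] such that γm is an integer. Let B be a uniformly random subset of {1,…,m} of cardinality γm. Then the probability that simultaneously (i) B ∩ C is nonempty and Σ_{i∈B∩C} z_i ≤ η·|B∩C|, and (ii) Σ_{i∈C} z_i > 1.1η·|C|, is at most exp(−γ|C|/8) + exp(−η²γ|C|/100). -/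
open scoped Classical BigOperators

/-!
The trace `B ∩ C` of a uniform `k`-subset `B` is hypergeometric: `|B ∩ C|` has mean `γ |C|`, and
given `|B ∩ C| = t` the trace is a uniform `t`-subset of `C`. Both ways for the bad event to
happen are hypergeometric lower tails, which we bound by Chernoff's method using Hoeffding's
comparison `E[x ^ X] ≤ (1 - (1 - x) p) ^ t` with the binomial law; the comparison follows by
induction on `t` from Chebyshev's sum inequality. With `x = 1/2`, `|B ∩ C| < γ |C| / 2` has
probability at most `exp (-γ |C| / 8)`. For `t ≥ γ |C| / 2`, the optimal `x` bounds the
probability that a `t`-subset of `C` has at most `η t` ones by `exp (-t KL(η ‖ p))`, where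
`p > 1.1 η` is the density of ones in `C`, and Pinsker's inequality gives
`KL(η ‖ p) ≥ 2 (p - η) ^ 2 ≥ η ^ 2 / 50`.
-/

open Finset Real

theorem Monovary.weighted_sum_mul_sum_le {ι : Type*} {f g w : ι → ℝ} (hfg : Monovary f g)
    (s : Finset ι) (hw : ∀ i ∈ s, 0 ≤ w i) :
    (∑ i ∈ s, w i * f i) * ∑ i ∈ s, w i * g i ≤
      (∑ i ∈ s, w i) * ∑ i ∈ s, w i * (f i * g i) := by
  have hpairs : 0 ≤ ∑ i ∈ s, ∑ j ∈ s, w i * w j * ((f j - f i) * (g j - g i)) :=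
    sum_nonneg fun i hi => sum_nonneg fun j hj =>
      mul_nonneg (mul_nonneg (hw i hi) (hw j hj)) (hfg.sub_mul_sub_nonneg i j)
  have hexpand : ∑ i ∈ s, ∑ j ∈ s, w i * w j * ((f j - f i) * (g j - g i)) =
      2 * ((∑ i ∈ s, w i) * ∑ i ∈ s, w i * (f i * g i) -
        (∑ i ∈ s, w i * f i) * ∑ i ∈ s, w i * g i) := by
    rw [sum_congr rfl fun i _ => sum_congr rfl fun j _ => show
      w i * w j * ((f j - f i) * (g j - g i)) = w i * (w j * (f j * g j)) +
        w i * (f i * g i) * w j - w i * g i * (w j * f j) - w i * f i * (w j * g j) by ring]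
    simp only [sum_add_distrib, sum_sub_distrib, ← mul_sum, ← sum_mul]
    ring
  linarith

/-- The number of `t`-subsets of an `n`-set with `s` marked points that contain exactly `j`
marked points, provided `j ≤ t` (for `j > t` the truncated `t - j` makes the value meaningless). -/
def hypergeomCount (n s t j : ℕ) : ℕ := s.choose j * (n - s).choose (t - j)

/-- `n.choose t` times the probability generating function of the hypergeometric law. -/
noncomputable def hypergeomGF (n s t : ℕ) (x : ℝ) : ℝ :=
  ∑ j ∈ range (t + 1), (hypergeomCount n s t j : ℝ) * x ^ j

section Hypergeometric

variable {n s t : ℕ}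

theorem sum_range_hypergeomCount (hs : s ≤ n) (t : ℕ) :
    ∑ j ∈ range (t + 1), hypergeomCount n s t j = n.choose t := by
  unfold hypergeomCount
  rw [← Nat.sum_antidiagonal_eq_sum_range_succ (fun i j => s.choose i * (n - s).choose j),
    ← Nat.add_choose_eq, Nat.add_sub_cancel' hs]

theorem mul_sum_range_sub_mul_hypergeomCount (hs : s ≤ n) (t : ℕ) :
    n * ∑ j ∈ range (t + 1), (s - j) * hypergeomCount n s t j = s * (n - t) * n.choose t := by
  obtain _ | a := s
  · simp
  obtain ⟨b, rfl⟩ : ∃ b, n = b + 1 := ⟨n - 1, by omega⟩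
  have hterm : ∀ j, (a + 1 - j) * hypergeomCount (b + 1) (a + 1) t j =
      (a + 1) * hypergeomCount b a t j := by
    intro j
    simp only [hypergeomCount, Nat.add_sub_add_right]
    rw [← mul_assoc, mul_comm _ ((a + 1).choose j), ← Nat.choose_mul_succ_eq]
    ring
  rw [sum_congr rfl fun j _ => hterm j, ← mul_sum, sum_range_hypergeomCount (by omega)]
  calc (b + 1) * ((a + 1) * b.choose t) = (a + 1) * (b.choose t * (b + 1)) := by ring
    _ = (a + 1) * (b + 1 - t) * (b + 1).choose t := by rw [Nat.choose_mul_succ_eq]; ring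

theorem sub_mul_hypergeomCount_succ {j : ℕ} (hj : j ≤ t) :
    (t + 1 - j) * hypergeomCount n s (t + 1) j =
      (n - s - (t - j)) * hypergeomCount n s t j := by
  simp only [hypergeomCount, show t + 1 - j = t - j + 1 by omega]
  rw [mul_comm (t - j + 1), mul_assoc, Nat.choose_succ_right_eq]
  ring

theorem succ_mul_hypergeomCount_succ_succ (j : ℕ) :
    (j + 1) * hypergeomCount n s (t + 1) (j + 1) = (s - j) * hypergeomCount n s t j := by
  simp only [hypergeomCount, Nat.add_sub_add_right]
  rw [← mul_assoc, ← mul_assoc, mul_comm (j + 1), Nat.choose_succ_right_eq, mul_comm (s - j)]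

theorem add_sub_mul_hypergeomCount (hs : s ≤ n) {j : ℕ} (hj : j ≤ t) :
    (n - s - (t - j) + (s - j)) * hypergeomCount n s t j =
      (n - t) * hypergeomCount n s t j := by
  by_cases h : j ≤ s ∧ t - j ≤ n - s
  · congr 1
    omega
  · have hzero : hypergeomCount n s t j = 0 := by
      rcases not_and_or.mp h with h | h <;>
        simp [hypergeomCount, Nat.choose_eq_zero_of_lt (not_le.mp h)]
    simp [hzero]

/-- Double counting `(t + 1)`-subsets with a distinguished point, according to whether that
point is marked. -/
theorem succ_mul_hypergeomGF_succ_add (hs : s ≤ n) (x : ℝ) :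
    ((t : ℝ) + 1) * hypergeomGF n s (t + 1) x +
        (1 - x) * ∑ j ∈ range (t + 1), ((s - j : ℕ) : ℝ) * hypergeomCount n s t j * x ^ j =
      ((n - t : ℕ) : ℝ) * hypergeomGF n s t x := by
  have hsplit : ((t : ℝ) + 1) * hypergeomGF n s (t + 1) x =
      ∑ j ∈ range (t + 2), (((t + 1 - j) * hypergeomCount n s (t + 1) j : ℕ) : ℝ) * x ^ j +
        ∑ j ∈ range (t + 2), ((j * hypergeomCount n s (t + 1) j : ℕ) : ℝ) * x ^ j := by
    rw [hypergeomGF, mul_sum, ← sum_add_distrib]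
    refine sum_congr rfl fun j hj => ?_
    have : ((t + 1 - j : ℕ) : ℝ) + j = t + 1 := by
      rw [Nat.cast_sub (by simpa [Nat.lt_succ_iff] using hj)]
      push_cast
      ring
    push_cast
    rw [← this]
    ring
  have hunmarked :
      ∑ j ∈ range (t + 2), (((t + 1 - j) * hypergeomCount n s (t + 1) j : ℕ) : ℝ) * x ^ j =
        ∑ j ∈ range (t + 1), (((n - s - (t - j)) * hypergeomCount n s t j : ℕ) : ℝ) * x ^ j := by
    rw [sum_range_succ, Nat.sub_self, zero_mul, Nat.cast_zero, zero_mul, add_zero]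
    exact sum_congr rfl fun j hj => by
      rw [sub_mul_hypergeomCount_succ (Nat.lt_succ_iff.mp (mem_range.mp hj))]
  have hmarked : ∑ j ∈ range (t + 2), ((j * hypergeomCount n s (t + 1) j : ℕ) : ℝ) * x ^ j =
      x * ∑ j ∈ range (t + 1), ((s - j : ℕ) : ℝ) * hypergeomCount n s t j * x ^ j := by
    rw [sum_range_succ', zero_mul, Nat.cast_zero, zero_mul, add_zero, mul_sum]
    exact sum_congr rfl fun j _ => by
      rw [succ_mul_hypergeomCount_succ_succ]
      push_cast
      ring
  rw [hsplit, hunmarked, hmarked, hypergeomGF, mul_sum, mul_sum, mul_sum, ← sum_add_distrib,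
    ← sum_add_distrib]
  refine sum_congr rfl fun j hj => ?_
  have := congrArg (Nat.cast : ℕ → ℝ)
    (add_sub_mul_hypergeomCount hs (Nat.lt_succ_iff.mp (mem_range.mp hj)))
  push_cast at this ⊢
  linear_combination x ^ j * this

variable {x : ℝ}

theorem hypergeomGF_le_choose (hs : s ≤ n) (hx0 : 0 ≤ x) (hx1 : x ≤ 1) (t : ℕ) :
    hypergeomGF n s t x ≤ n.choose t := by
  rw [← sum_range_hypergeomCount hs, Nat.cast_sum, hypergeomGF]
  exact sum_le_sum fun j _ => mul_le_of_le_one_right (Nat.cast_nonneg _) (pow_le_one₀ hx0 hx1)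

theorem succ_mul_hypergeomGF_succ_le (hs : s ≤ n) (ht : t < n) (hx0 : 0 ≤ x) (hx1 : x ≤ 1) :
    ((t : ℝ) + 1) * hypergeomGF n s (t + 1) x ≤
      ((n : ℝ) - t) * (1 - (1 - x) * (s / n)) * hypergeomGF n s t x := by
  set w : ℕ → ℝ := fun j => hypergeomCount n s t j
  set D := ∑ j ∈ range (t + 1), ((s - j : ℕ) : ℝ) * w j * x ^ j
  have hn : (0 : ℝ) < n := by exact_mod_cast (Nat.zero_le t).trans_lt ht
  have hC : (0 : ℝ) < n.choose t := by exact_mod_cast Nat.choose_pos ht.le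
  have hsum : ∑ j ∈ range (t + 1), w j = n.choose t := by
    simp only [w]
    exact_mod_cast sum_range_hypergeomCount hs t
  have hmean : (n : ℝ) * ∑ j ∈ range (t + 1), w j * ((s - j : ℕ) : ℝ) =
      s * (n - t) * n.choose t := by
    have := congrArg (Nat.cast : ℕ → ℝ) (mul_sum_range_sub_mul_hypergeomCount hs t)
    push_cast [Nat.cast_sub ht.le] at this
    simpa only [w, mul_comm] using this
  have hcheb : hypergeomGF n s t x * ∑ j ∈ range (t + 1), w j * ((s - j : ℕ) : ℝ) ≤
      n.choose t * D := by
    have h := Monovary.weighted_sum_mul_sum_le (w := w) (f := fun j => x ^ j)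
      (g := fun j => ((s - j : ℕ) : ℝ)) (Antitone.monovary (pow_right_anti₀ hx0 hx1)
        fun a b h => Nat.cast_le.mpr (Nat.sub_le_sub_left h s)) (range (t + 1))
      fun j _ => Nat.cast_nonneg _
    rwa [hsum, sum_congr rfl fun j _ => show w j * (x ^ j * ((s - j : ℕ) : ℝ)) =
      ((s - j : ℕ) : ℝ) * w j * x ^ j by ring] at h
  have hD : s * (n - t) * hypergeomGF n s t x ≤ n * D := by
    refine le_of_mul_le_mul_right ?_ hC
    calc s * (n - t) * hypergeomGF n s t x * n.choose t
        = n * (hypergeomGF n s t x * ∑ j ∈ range (t + 1), w j * ((s - j : ℕ) : ℝ)) := by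
          rw [mul_left_comm, hmean]
          ring
      _ ≤ n * (n.choose t * D) := by gcongr
      _ = n * D * n.choose t := by ring
  have hid := succ_mul_hypergeomGF_succ_add (t := t) hs x
  rw [Nat.cast_sub ht.le] at hid
  have h1x : 0 ≤ 1 - x := by linarith
  calc ((t : ℝ) + 1) * hypergeomGF n s (t + 1) x
      = (n - t) * hypergeomGF n s t x - (1 - x) * D := by linarith
    _ ≤ (n - t) * hypergeomGF n s t x - (1 - x) * (s * (n - t) * hypergeomGF n s t x / n) := by
        gcongr
        rw [div_le_iff₀ hn]
        linarith
    _ = _ := by field_simp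

theorem hypergeomGF_le (hs : s ≤ n) (hx0 : 0 ≤ x) (hx1 : x ≤ 1) (t : ℕ) :
    hypergeomGF n s t x ≤ n.choose t * (1 - (1 - x) * (s / n)) ^ t := by
  induction t with
  | zero => simp [hypergeomGF, hypergeomCount]
  | succ t ih =>
    set q := 1 - (1 - x) * (s / n)
    rcases lt_or_ge t n with ht | ht
    · have hq : 0 ≤ q := by
        have : (s : ℝ) / n ≤ 1 := div_le_one_of_le₀ (by exact_mod_cast hs) (Nat.cast_nonneg n)
        nlinarith [div_nonneg (Nat.cast_nonneg s) (Nat.cast_nonneg n (α := ℝ))]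
      have hchoose := congrArg (Nat.cast : ℕ → ℝ) (Nat.choose_succ_right_eq n t)
      push_cast [Nat.cast_sub ht.le] at hchoose
      refine le_of_mul_le_mul_left ?_ (by positivity : (0 : ℝ) < t + 1)
      calc ((t : ℝ) + 1) * hypergeomGF n s (t + 1) x
          ≤ (n - t) * q * hypergeomGF n s t x := succ_mul_hypergeomGF_succ_le hs ht hx0 hx1
        _ ≤ (n - t) * q * (n.choose t * q ^ t) := by
            gcongr
            exact mul_nonneg (by linarith [(Nat.cast_le (α := ℝ)).mpr ht.le]) hq
        _ = (t + 1) * (n.choose (t + 1) * q ^ (t + 1)) := by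
            rw [pow_succ]
            linear_combination q ^ t * q * hchoose.symm
    · have := hypergeomGF_le_choose hs hx0 hx1 (t + 1)
      rw [Nat.choose_eq_zero_of_lt (by omega), Nat.cast_zero] at this ⊢
      simpa using this

theorem sum_filter_hypergeomCount_le_rpow_mul (P : ℕ → Prop) [DecidablePred P] {a : ℝ}
    (hx0 : 0 < x) (hx1 : x ≤ 1) (hP : ∀ j, P j → (j : ℝ) ≤ a) :
    ∑ j ∈ range (t + 1) with P j, (hypergeomCount n s t j : ℝ) ≤
      x ^ (-a) * hypergeomGF n s t x := by
  calc ∑ j ∈ range (t + 1) with P j, (hypergeomCount n s t j : ℝ)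
      ≤ ∑ j ∈ range (t + 1) with P j, x ^ (-a) * ((hypergeomCount n s t j : ℝ) * x ^ j) := by
        refine sum_le_sum fun j hj => ?_
        have hone : 1 ≤ x ^ (-a) * x ^ j := by
          rw [← rpow_natCast, ← rpow_add hx0]
          exact one_le_rpow_of_pos_of_le_one_of_nonpos hx0 hx1
            (by linarith [hP j (mem_filter.mp hj).2])
        nlinarith [(Nat.cast_nonneg (hypergeomCount n s t j) : (0 : ℝ) ≤ _)]
    _ ≤ ∑ j ∈ range (t + 1), x ^ (-a) * ((hypergeomCount n s t j : ℝ) * x ^ j) :=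
        sum_le_sum_of_subset_of_nonneg (filter_subset _ _) fun _ _ _ => by positivity
    _ = x ^ (-a) * hypergeomGF n s t x := by rw [hypergeomGF, mul_sum]

theorem sum_filter_lt_half_mean_hypergeomCount_le (hs : s ≤ n) (t : ℕ) :
    ∑ j ∈ range (t + 1) with ((j : ℕ) : ℝ) < t * s / n / 2, (hypergeomCount n s t j : ℝ) ≤
      n.choose t * exp (-(t * s / n) / 8) := by
  set μ : ℝ := t * s / n
  have hsn : (s : ℝ) / n ≤ 1 := div_le_one_of_le₀ (by exact_mod_cast hs) (Nat.cast_nonneg n)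
  have hq : (1 - (1 - 1 / 2) * (s / n) : ℝ) ^ t ≤ exp (-μ / 2) := by
    calc (1 - (1 - 1 / 2) * (s / n) : ℝ) ^ t ≤ exp (-(s / n) / 2) ^ t := by
          gcongr
          · linarith
          · linarith [add_one_le_exp (-(s / n : ℝ) / 2)]
      _ = exp (-μ / 2) := by
          rw [← exp_nat_mul]
          congr 1
          simp only [μ]
          ring
  have hx : (1 / 2 : ℝ) ^ (-(μ / 2)) = exp (μ / 2 * log 2) := by
    rw [rpow_def_of_pos (by norm_num), one_div, log_inv]
    ring_nf
  calc ∑ j ∈ range (t + 1) with ((j : ℕ) : ℝ) < μ / 2, (hypergeomCount n s t j : ℝ)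
      ≤ (1 / 2 : ℝ) ^ (-(μ / 2)) * hypergeomGF n s t (1 / 2) :=
        sum_filter_hypergeomCount_le_rpow_mul _ (by norm_num) (by norm_num) fun _ h => h.le
    _ ≤ exp (μ / 2 * log 2) * (n.choose t * exp (-μ / 2)) := by
        rw [hx]
        gcongr
        exact (hypergeomGF_le hs (by norm_num) (by norm_num) t).trans (by gcongr)
    _ = n.choose t * exp (μ / 2 * log 2 + -μ / 2) := by
        rw [exp_add]
        ring
    _ ≤ n.choose t * exp (-μ / 8) := by
        have hμ : 0 ≤ μ := by positivity
        gcongr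
        nlinarith [log_two_lt_d9]

end Hypergeometric

noncomputable def binKLDiv (a b : ℝ) : ℝ := a * log (a / b) + (1 - a) * log ((1 - a) / (1 - b))

theorem two_mul_sq_sub_le_binKLDiv {a b : ℝ} (ha : 0 < a) (hab : a ≤ b) (hb : b < 1) :
    2 * (b - a) ^ 2 ≤ binKLDiv a b := by
  set g : ℝ → ℝ := fun x => -a * log x - (1 - a) * log (1 - x) - 2 * (x - a) ^ 2
  have hderiv : ∀ x ∈ Set.Icc a b,
      HasDerivAt g (-a / x + (1 - a) / (1 - x) - 4 * (x - a)) x := by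
    intro x hx
    have hx0 : x ≠ 0 := by linarith [hx.1]
    have hx1 : 1 - x ≠ 0 := by linarith [hx.2]
    have h := (((hasDerivAt_log hx0).const_mul (-a)).sub
      (((hasDerivAt_id x).const_sub 1).log hx1 |>.const_mul (1 - a))).sub
      ((((hasDerivAt_id x).sub_const a).pow 2).const_mul 2)
    refine h.congr_deriv ?_
    simp only [id]
    field_simp
    ring
  have hmono : MonotoneOn g (Set.Icc a b) := by
    refine monotoneOn_of_hasDerivWithinAt_nonneg (convex_Icc a b)
      (fun x hx => (hderiv x hx).continuousAt.continuousWithinAt)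
      (fun x hx => (hderiv x (interior_subset hx)).hasDerivWithinAt) fun x hx => ?_
    rw [interior_Icc] at hx
    have hx0 : 0 < x := by linarith [hx.1]
    have hx1 : 0 < 1 - x := by linarith [hx.2]
    have : -a / x + (1 - a) / (1 - x) - 4 * (x - a) =
        (x - a) * (1 - 2 * x) ^ 2 / (x * (1 - x)) := by
      field_simp
      ring
    rw [this]
    exact div_nonneg (mul_nonneg (by linarith [hx.1]) (sq_nonneg _)) (by positivity)
  have hgab := hmono (Set.left_mem_Icc.mpr hab) (Set.right_mem_Icc.mpr hab) hab
  simp only [g] at hgab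
  rw [binKLDiv, log_div ha.ne' (by linarith), log_div (by linarith) (by linarith)]
  linarith

theorem rpow_neg_mul_pow_eq_exp_binKLDiv {a b : ℝ} (ha : 0 < a) (ha1 : a < 1) (hb : 0 < b)
    (hb1 : b < 1) (t : ℕ) :
    (a * (1 - b) / (b * (1 - a))) ^ (-(a * t)) * ((1 - b) / (1 - a)) ^ t =
      exp (-(t * binKLDiv a b)) := by
  have ha1' : 0 < 1 - a := sub_pos.mpr ha1
  have hb1' : 0 < 1 - b := sub_pos.mpr hb1
  have hx : log (a * (1 - b) / (b * (1 - a))) = log a + log (1 - b) - log b - log (1 - a) := by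
    rw [log_div (by positivity) (by positivity), log_mul ha.ne' hb1'.ne',
      log_mul hb.ne' ha1'.ne']
    ring
  rw [rpow_def_of_pos (by positivity), ← exp_log (div_pos hb1' ha1'), ← exp_nat_mul, ← exp_add,
    binKLDiv, hx, log_div hb1'.ne' ha1'.ne', log_div ha.ne' hb.ne', log_div ha1'.ne' hb1'.ne']
  ring_nf

section UpperTail

variable {n s : ℕ}

theorem sum_filter_le_mul_hypergeomCount_le_exp_binKLDiv {a : ℝ} (hs : s < n) (ha : 0 < a)
    (hab : a ≤ s / n) (t : ℕ) :
    ∑ j ∈ range (t + 1) with ((j : ℕ) : ℝ) ≤ a * t, (hypergeomCount n s t j : ℝ) ≤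
      n.choose t * exp (-(t * binKLDiv a (s / n))) := by
  set b : ℝ := s / n
  have hn : (0 : ℝ) < n := by exact_mod_cast (Nat.zero_le s).trans_lt hs
  have hb1 : b < 1 := (div_lt_one hn).mpr (by exact_mod_cast hs)
  have hb0 : 0 < b := ha.trans_le hab
  have ha1 : a < 1 := hab.trans_lt hb1
  -- the minimiser of `x ^ (-a) * (1 - (1 - x) * b)` over `0 < x ≤ 1`
  set x : ℝ := a * (1 - b) / (b * (1 - a))
  have hx0 : 0 < x := div_pos (mul_pos ha (by linarith)) (mul_pos hb0 (by linarith))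
  have hx1 : x ≤ 1 := (div_le_one (mul_pos hb0 (by linarith))).mpr (by nlinarith)
  have hq : 1 - (1 - x) * b = (1 - b) / (1 - a) := by
    simp only [x]
    field_simp [(sub_pos.mpr ha1).ne']
    ring
  calc ∑ j ∈ range (t + 1) with ((j : ℕ) : ℝ) ≤ a * t, (hypergeomCount n s t j : ℝ)
      ≤ x ^ (-(a * t)) * hypergeomGF n s t x :=
        sum_filter_hypergeomCount_le_rpow_mul _ hx0 hx1 fun _ h => h
    _ ≤ x ^ (-(a * t)) * (n.choose t * ((1 - b) / (1 - a)) ^ t) := by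
        rw [← hq]
        gcongr
        exact hypergeomGF_le hs.le hx0.le hx1 t
    _ = n.choose t * exp (-(t * binKLDiv a b)) := by
        rw [← rpow_neg_mul_pow_eq_exp_binKLDiv ha ha1 hb0 hb1]
        ring

theorem sum_filter_le_mul_hypergeomCount_le_exp_sq {η : ℝ} (hs : s ≤ n) (hη : 0 < η)
    (hsη : 1.1 * η * n < s) (t : ℕ) :
    ∑ j ∈ range (t + 1) with ((j : ℕ) : ℝ) ≤ η * t, (hypergeomCount n s t j : ℝ) ≤
      n.choose t * exp (-(η ^ 2 * t) / 50) := by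
  rcases hs.lt_or_eq with hs | rfl
  · have hn : (0 : ℝ) < n := by exact_mod_cast (Nat.zero_le s).trans_lt hs
    have hb : 1.1 * η ≤ s / n := by
      rw [le_div_iff₀ hn]
      linarith
    refine (sum_filter_le_mul_hypergeomCount_le_exp_binKLDiv hs hη (by linarith) t).trans ?_
    have hKL := two_mul_sq_sub_le_binKLDiv (b := s / n) hη (by linarith)
      ((div_lt_one hn).mpr (by exact_mod_cast hs))
    have hgap : (η / 10) ^ 2 ≤ (s / n - η) ^ 2 := by
      gcongr
      linarith
    have hKL' : η ^ 2 / 50 ≤ binKLDiv η (s / n) := by linarith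
    gcongr
    linarith [mul_le_mul_of_nonneg_left hKL' (Nat.cast_nonneg t : (0 : ℝ) ≤ t)]
  · -- all points are marked, so only `j = t` contributes, and `t ≤ η t` forces `t = 0`
    have hη1 : η < 1 := by nlinarith [(Nat.cast_nonneg s : (0 : ℝ) ≤ s)]
    rcases t.eq_zero_or_pos with rfl | ht
    · simp [hypergeomCount]
    rw [sum_eq_zero fun j hj => ?_]
    · positivity
    have hj : (j : ℝ) < t := (mem_filter.mp hj).2.trans_lt
      (by nlinarith [(Nat.cast_pos.mpr ht : (0 : ℝ) < t)])
    have hjt : j < t := by exact_mod_cast hj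
    simp [hypergeomCount, Nat.choose_eq_zero_of_lt (show 0 < t - j by omega)]

end UpperTail

section Counting

variable {α : Type*} [DecidableEq α] {U C : Finset α}

theorem filter_powersetCard_inter_eq {S : Finset α} (hSC : S ⊆ C) (k : ℕ) :
    {B ∈ U.powersetCard k | B ∩ C = S} = {B ∈ (U \ (C \ S)).powersetCard k | S ⊆ B} := by
  ext B
  simp only [mem_filter, mem_powersetCard, subset_iff, mem_sdiff, Finset.ext_iff, mem_inter]
  constructor
  · rintro ⟨⟨hBU, hB⟩, hBS⟩
    exact ⟨⟨fun x hx => ⟨hBU hx, fun h => h.2 ((hBS x).mp ⟨hx, h.1⟩)⟩, hB⟩,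
      fun x hx => ((hBS x).mpr hx).1⟩
  · rintro ⟨⟨hBU, hB⟩, hSB⟩
    exact ⟨⟨fun x hx => (hBU hx).1, hB⟩, fun x =>
      ⟨fun h => by_contra fun hS => (hBU h.1).2 ⟨h.2, hS⟩, fun h => ⟨hSB h, hSC h⟩⟩⟩

theorem card_filter_powersetCard_inter_eq_choose {S : Finset α} (hCU : C ⊆ U) (hSC : S ⊆ C)
    {k : ℕ} (hSk : #S ≤ k) :
    #{B ∈ U.powersetCard k | B ∩ C = S} = (#U - #C).choose (k - #S) := by
  have hSU : S ⊆ U \ (C \ S) := fun x hx =>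
    mem_sdiff.mpr ⟨hCU (hSC hx), fun h => (mem_sdiff.mp h).2 hx⟩
  rw [filter_powersetCard_inter_eq hSC, card_filter_powersetCard_subset _ _ _ hSU hSk,
    card_sdiff_of_subset (sdiff_subset.trans hCU), card_sdiff_of_subset hSC]
  have := card_le_card hSC
  have := card_le_card hCU
  congr 1
  omega

theorem card_filter_powersetCard_inter (hCU : C ⊆ U) (P : Finset α → Prop) [DecidablePred P]
    (k : ℕ) :
    #{B ∈ U.powersetCard k | P (B ∩ C)} =
      ∑ t ∈ range (k + 1), #{S ∈ C.powersetCard t | P S} * (#U - #C).choose (k - t) := by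
  set T := {S ∈ C.powerset | P S ∧ #S ≤ k}
  have hmaps : ∀ B ∈ {B ∈ U.powersetCard k | P (B ∩ C)}, B ∩ C ∈ T := by
    intro B hB
    simp only [mem_filter, mem_powersetCard, T, mem_powerset] at hB ⊢
    exact ⟨inter_subset_right, hB.2, (card_le_card inter_subset_left).trans hB.1.2.le⟩
  have hfiber : ∀ S ∈ T, #{B ∈ {B ∈ U.powersetCard k | P (B ∩ C)} | B ∩ C = S} =
      (#U - #C).choose (k - #S) := by
    intro S hS
    simp only [T, mem_filter, mem_powerset] at hS
    rw [filter_filter, ← card_filter_powersetCard_inter_eq_choose hCU hS.1 hS.2.2]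
    congr 1
    exact filter_congr fun B _ => ⟨And.right, fun h => ⟨h ▸ hS.2.1, h⟩⟩
  rw [card_eq_sum_card_fiberwise hmaps, sum_congr rfl hfiber,
    ← sum_fiberwise_of_maps_to (g := card) (t := range (k + 1))
      fun S hS => mem_range.mpr (Nat.lt_succ_of_le (mem_filter.mp hS).2.2)]
  refine sum_congr rfl fun t ht => ?_
  have hslice : {S ∈ T | #S = t} = {S ∈ C.powersetCard t | P S} := by
    ext S
    simp only [T, mem_filter, mem_powerset, mem_powersetCard]
    constructor
    · rintro ⟨⟨hSC, hP, -⟩, rfl⟩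
      exact ⟨⟨hSC, rfl⟩, hP⟩
    · rintro ⟨⟨hSC, rfl⟩, hP⟩
      exact ⟨⟨hSC, hP, Nat.lt_succ_iff.mp (mem_range.mp ht)⟩, rfl⟩
  rw [hslice, sum_congr rfl fun S hS => by rw [(mem_powersetCard.mp (mem_filter.mp hS).1).2],
    sum_const, smul_eq_mul]

theorem card_filter_powersetCard_card_inter (hCU : C ⊆ U) (P : ℕ → Prop) [DecidablePred P]
    (k : ℕ) :
    #{B ∈ U.powersetCard k | P #(B ∩ C)} =
      ∑ j ∈ range (k + 1) with P j, hypergeomCount #U #C k j := by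
  rw [card_filter_powersetCard_inter hCU fun S => P #S, sum_filter]
  refine sum_congr rfl fun j _ => ?_
  split_ifs with hj
  · rw [filter_true_of_mem fun S hS => (mem_powersetCard.mp hS).2 ▸ hj, card_powersetCard,
      hypergeomCount]
  · rw [filter_false_of_mem fun S hS => (mem_powersetCard.mp hS).2 ▸ hj, card_empty, zero_mul]

theorem card_filter_card_inter_lt_half_mean_le (hCU : C ⊆ U) (k : ℕ) :
    (#{B ∈ U.powersetCard k | (#(B ∩ C) : ℝ) < k * #C / #U / 2} : ℝ) ≤
      (#U).choose k * exp (-(k * #C / #U) / 8) := by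
  rw [card_filter_powersetCard_card_inter hCU fun j => (j : ℝ) < k * #C / #U / 2]
  push_cast
  exact sum_filter_lt_half_mean_hypergeomCount_le (card_le_card hCU) k

theorem card_filter_powersetCard_card_filter_le {p : α → Prop} [DecidablePred p] {η : ℝ}
    (hη : 0 < η) (hp : 1.1 * η * #C < #(C.filter p)) (t : ℕ) :
    (#{S ∈ C.powersetCard t | (#(S.filter p) : ℝ) ≤ η * #S} : ℝ) ≤
      (#C).choose t * exp (-(η ^ 2 * t) / 50) := by
  have hslice : {S ∈ C.powersetCard t | (#(S.filter p) : ℝ) ≤ η * #S} =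
      {S ∈ C.powersetCard t | (#(S ∩ C.filter p) : ℝ) ≤ η * t} := by
    refine filter_congr fun S hS => ?_
    rw [mem_powersetCard] at hS
    rw [inter_filter, inter_eq_left.mpr hS.1, hS.2]
  rw [hslice, card_filter_powersetCard_card_inter (filter_subset p C)
    fun j => (j : ℝ) ≤ η * t]
  push_cast
  exact sum_filter_le_mul_hypergeomCount_le_exp_sq (card_le_card (filter_subset p C)) hη hp t

theorem card_filter_le_card_inter_and_card_filter_le {p : α → Prop} [DecidablePred p] {η : ℝ}
    (hCU : C ⊆ U) (hη : 0 < η) (hp : 1.1 * η * #C < #(C.filter p)) (a : ℝ) (k : ℕ) :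
    (#{B ∈ U.powersetCard k |
        a ≤ #(B ∩ C) ∧ (#((B ∩ C).filter p) : ℝ) ≤ η * #(B ∩ C)} : ℝ) ≤
      (#U).choose k * exp (-(η ^ 2 * a) / 50) := by
  rw [card_filter_powersetCard_inter hCU fun S => a ≤ #S ∧ (#(S.filter p) : ℝ) ≤ η * #S]
  push_cast
  calc ∑ t ∈ range (k + 1),
        (#{S ∈ C.powersetCard t | a ≤ #S ∧ (#(S.filter p) : ℝ) ≤ η * #S} : ℝ) *
          ((#U - #C).choose (k - t) : ℕ)
      ≤ ∑ t ∈ range (k + 1),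
          (#C).choose t * exp (-(η ^ 2 * a) / 50) * ((#U - #C).choose (k - t) : ℕ) := by
        refine sum_le_sum fun t _ => mul_le_mul_of_nonneg_right ?_ (Nat.cast_nonneg _)
        by_cases ha : a ≤ t
        · calc (#{S ∈ C.powersetCard t | a ≤ #S ∧ (#(S.filter p) : ℝ) ≤ η * #S} : ℝ)
              ≤ #{S ∈ C.powersetCard t | (#(S.filter p) : ℝ) ≤ η * #S} := by
                exact_mod_cast card_le_card fun S hS => by
                  rw [mem_filter] at hS ⊢
                  exact ⟨hS.1, hS.2.2⟩
            _ ≤ (#C).choose t * exp (-(η ^ 2 * t) / 50) :=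
                card_filter_powersetCard_card_filter_le hη hp t
            _ ≤ (#C).choose t * exp (-(η ^ 2 * a) / 50) := by gcongr
        · rw [filter_false_of_mem fun S hS h => ha (by
            simpa only [(mem_powersetCard.mp hS).2] using h.1), card_empty, Nat.cast_zero]
          positivity
    _ = (#U).choose k * exp (-(η ^ 2 * a) / 50) := by
        rw [← sum_range_hypergeomCount (card_le_card hCU) k, Nat.cast_sum, sum_mul]
        exact sum_congr rfl fun t _ => by
          rw [hypergeomCount]
          push_cast
          ring

end Counting

theorem stmt3_general (m : ℕ) (hm : 0 < m) (C : Finset (Fin m))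
    (z : Fin m → Bool) (η : ℝ) (hη0 : 0 < η)
    (γ : ℝ) (k : ℕ) (hk : (k : ℝ) = γ * m) :
    (((Finset.powersetCard k (Finset.univ : Finset (Fin m))).filter
        (fun B : Finset (Fin m) =>
          ((B ∩ C).Nonempty ∧
            (((B ∩ C).filter (fun i => z i = true)).card : ℝ) ≤ η * (B ∩ C).card) ∧
          1.1 * η * C.card < ((C.filter (fun i => z i = true)).card : ℝ))).card : ℝ) /
      ((Finset.powersetCard k (Finset.univ : Finset (Fin m))).card : ℝ)
    ≤ Real.exp (-(γ * C.card) / 8) + Real.exp (-(η ^ 2 * γ * C.card) / 100) := by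
  refine div_le_of_le_mul₀ (Nat.cast_nonneg _) (by positivity) ?_
  by_cases hp : 1.1 * η * #C < (#(C.filter fun i => z i = true) : ℝ)
  swap
  · rw [filter_false_of_mem fun B _ hB => hp hB.2, card_empty, Nat.cast_zero]
    positivity
  have hmean : (k : ℝ) * #C / #(univ : Finset (Fin m)) = γ * #C := by
    rw [card_fin, hk]
    field_simp
  have hsmall := card_filter_card_inter_lt_half_mean_le (subset_univ C) k
  have hskewed := card_filter_le_card_inter_and_card_filter_le (subset_univ C) hη0 hp
    (γ * #C / 2) k
  rw [hmean] at hsmall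
  rw [show -(η ^ 2 * (γ * #C / 2)) / 50 = -(η ^ 2 * γ * #C) / 100 by ring] at hskewed
  calc _ ≤ (#({B ∈ powersetCard k (univ : Finset (Fin m)) | (#(B ∩ C) : ℝ) < γ * #C / 2} ∪
        {B ∈ powersetCard k (univ : Finset (Fin m)) | γ * #C / 2 ≤ #(B ∩ C) ∧
          (#((B ∩ C).filter fun i => z i = true) : ℝ) ≤ η * #(B ∩ C)}) : ℝ) := by
        refine Nat.cast_le.mpr (card_le_card fun B hB => ?_)
        simp only [mem_union, mem_filter] at hB ⊢
        rcases lt_or_ge (#(B ∩ C) : ℝ) (γ * #C / 2) with h | h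
        · exact .inl ⟨hB.1, h⟩
        · exact .inr ⟨hB.1, h, hB.2.1.2⟩
    _ ≤ _ := by
        refine (Nat.cast_le.mpr (card_union_le _ _)).trans ?_
        rw [card_powersetCard]
        push_cast
        linarith

theorem stmt3 (m : ℕ) (hm : 0 < m) (C : Finset (Fin m)) (hC : C.Nonempty)
    (z : Fin m → Bool) (η : ℝ) (hη0 : 0 < η) (hη1 : η < 1)
    (γ : ℝ) (hγ0 : 0 < γ) (hγ1 : γ ≤ 1) (k : ℕ) (hk : (k : ℝ) = γ * m) :
    (((Finset.powersetCard k (Finset.univ : Finset (Fin m))).filter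
        (fun B : Finset (Fin m) =>
          ((B ∩ C).Nonempty ∧
            (((B ∩ C).filter (fun i => z i = true)).card : ℝ) ≤ η * (B ∩ C).card) ∧
          1.1 * η * C.card < ((C.filter (fun i => z i = true)).card : ℝ))).card : ℝ) /
      ((Finset.powersetCard k (Finset.univ : Finset (Fin m))).card : ℝ)
    ≤ Real.exp (-(γ * C.card) / 8) + Real.exp (-(η ^ 2 * γ * C.card) / 100) :=
  stmt3_general m hm C z η hη0 γ k hk
end

section
/- Let S be a finite nonempty set, m a positive integer, and let X = (X_1,…,X_m) be a random variable distributed uniformly on S^m, defined jointly with other random variables on a common probability space. Let D be any event with Pr(D) ≥ ε > 0. For each i and each prefix w ∈ S^{i−1} with Pr(X_{<i} = w, D) > 0, let P_i(·|w) denote the conditional distribution of X_i given X_{<i} = w and D. Then (1/m) Σ_{i=1}^m E_w[ d_TV( P_i(·|w), Unif(S) ) ] ≤ √( log₂(1/ε) / (2m) ), where for each i the expectation is over w distributed as X_{<i} conditioned on D, and Unif(S) is the uniform distribution on S. -/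
/-!
Write `A_k(w) = Pr(D, X_{<k} = w)` and `P = Pr(D)`. Pinsker's inequality, in the homogeneous
form `(∑ |q - p|)² ≤ 2 (∑ q) ∑ q log (q / p)` (from `klFun t ≥ 3 (t - 1)² / (2 (t + 2))` and
Cauchy–Schwarz), bounds `A_k(w) · d_TV(P_k(·|w), Unif)` by `√(A_k(w)) · √(K_k(w) / 2)`, where
`K_k(w)` is `A_k(w)` times the divergence of `P_k(·|w)` from uniform. By the chain rule the
`K_k(w)` sum to the divergence of `Pr(D, X = ·)` from `P · Unif(S^m)`, which is at most
`P log (1 / P)` because `Pr(D, X = v) ≤ |S|^(-m)`. Cauchy–Schwarz over all `(k, w)` bounds `m P`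
times the average by `√(m P) · √(P log (1 / P) / 2)`; finally `ln ≤ log₂` on `[1, ∞)`.
-/

open MeasureTheory Real Finset InformationTheory

theorem Fin.sum_sum_snoc {α M : Type*} [Fintype α] [AddCommMonoid M] {n : ℕ}
    (f : (Fin (n + 1) → α) → M) :
    ∑ w : Fin n → α, ∑ s, f (Fin.snoc w s) = ∑ v, f v := by
  rw [← Fintype.sum_equiv (Fin.snocEquiv fun _ => α) (fun p => f (Fin.snoc p.2 p.1)) f
    (fun _ => rfl), Fintype.sum_prod_type, sum_comm]

theorem sum_mul_log_le_sum_mul_log_of_le {ι : Type*} [Fintype ι] {a : ι → ℝ} {c : ℝ}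
    (ha : ∀ i, 0 ≤ a i) (hc : ∀ i, a i ≤ c) :
    ∑ i, a i * log (a i) ≤ (∑ i, a i) * log c := by
  rw [sum_mul]
  refine sum_le_sum fun i _ => ?_
  rcases (ha i).eq_or_lt with h0 | hpos
  · simp [← h0]
  · exact mul_le_mul_of_nonneg_left (log_le_log hpos (hc i)) hpos.le

theorem Real.sum_sum_sqrt_mul_sqrt_le {ι : Type*} {κ : ι → Type*} [Fintype ι]
    [∀ i, Fintype (κ i)] {f g : (i : ι) → κ i → ℝ} (hf : ∀ i j, 0 ≤ f i j)
    (hg : ∀ i j, 0 ≤ g i j) :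
    ∑ i, ∑ j, √(f i j) * √(g i j) ≤ √(∑ i, ∑ j, f i j) * √(∑ i, ∑ j, g i j) :=
  (sum_le_sum fun i _ => sum_sqrt_mul_sqrt_le _ (hf i) (hg i)).trans
    (sum_sqrt_mul_sqrt_le _ (fun i => sum_nonneg fun j _ => hf i j)
      (fun i => sum_nonneg fun j _ => hg i j))

theorem Real.log_le_logb_two {x : ℝ} (hx : 1 ≤ x) : log x ≤ logb 2 x := by
  rw [logb, le_div_iff₀ (log_pos one_lt_two)]
  exact mul_le_of_le_one_right (log_nonneg hx) (log_two_lt_d9.le.trans (by norm_num))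

noncomputable def pinskerGap (t : ℝ) : ℝ := klFun t - 3 * (t - 1) ^ 2 / (2 * (t + 2))

noncomputable def pinskerGapDeriv (t : ℝ) : ℝ :=
  log t - 3 * (t - 1) * (t + 5) / (2 * (t + 2) ^ 2)

theorem hasDerivAt_pinskerGap {t : ℝ} (ht : 0 < t) :
    HasDerivAt pinskerGap (pinskerGapDeriv t) t := by
  have hnum : HasDerivAt (fun t : ℝ => 3 * (t - 1) ^ 2) (3 * (2 * (t - 1))) t := by
    simpa using (((hasDerivAt_id t).sub_const 1).fun_pow 2).const_mul 3
  have hden : HasDerivAt (fun t : ℝ => 2 * (t + 2)) 2 t := by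
    simpa using ((hasDerivAt_id t).add_const 2).const_mul 2
  refine ((hasDerivAt_klFun ht.ne').fun_sub
    (hnum.fun_div hden (by positivity))).congr_deriv ?_
  rw [pinskerGapDeriv]
  field_simp
  ring

theorem hasDerivAt_pinskerGapDeriv {t : ℝ} (ht : 0 < t) :
    HasDerivAt pinskerGapDeriv (1 / t - 27 / (t + 2) ^ 3) t := by
  have hnum : HasDerivAt (fun t : ℝ => 3 * (t - 1) * (t + 5)) (3 * (t + 5) + 3 * (t - 1)) t := by
    simpa using
      (((hasDerivAt_id t).sub_const 1).const_mul 3).fun_mul ((hasDerivAt_id t).add_const 5)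
  have hden : HasDerivAt (fun t : ℝ => 2 * (t + 2) ^ 2) (2 * (2 * (t + 2))) t := by
    simpa using (((hasDerivAt_id t).add_const 2).fun_pow 2).const_mul 2
  refine ((hasDerivAt_log ht.ne').fun_sub
    (hnum.fun_div hden (by positivity))).congr_deriv ?_
  field_simp
  ring

theorem monotoneOn_pinskerGapDeriv : MonotoneOn pinskerGapDeriv (Set.Ioi 0) := by
  refine monotoneOn_of_hasDerivWithinAt_nonneg (convex_Ioi 0)
    (fun t ht => (hasDerivAt_pinskerGapDeriv ht).continuousAt.continuousWithinAt)
    (fun t ht => (hasDerivAt_pinskerGapDeriv (interior_subset ht)).hasDerivWithinAt) ?_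
  intro t ht
  rw [interior_Ioi] at ht
  have ht : 0 < t := ht
  -- `(t + 2) ^ 3 ≥ 27 t` is AM-GM for `t, 1, 1`
  rw [sub_nonneg, div_le_div_iff₀ (by positivity) ht]
  nlinarith [sq_nonneg (t - 1)]

theorem pinskerGap_nonneg {t : ℝ} (ht : 0 ≤ t) : 0 ≤ pinskerGap t := by
  have hcont : ContinuousOn pinskerGap (Set.Ici 0) := by
    refine continuous_klFun.continuousOn.sub (ContinuousOn.div (by fun_prop) (by fun_prop) ?_)
    intro t ht
    have : (0 : ℝ) ≤ t := ht
    positivity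
  have hderiv_one : pinskerGapDeriv 1 = 0 := by simp [pinskerGapDeriv]
  have hgap_one : pinskerGap 1 = 0 := by simp [pinskerGap, klFun_one]
  rcases le_total t 1 with h | h
  · have := antitoneOn_of_hasDerivWithinAt_nonpos (f' := pinskerGapDeriv) (convex_Icc 0 1)
      (hcont.mono Set.Icc_subset_Ici_self) (fun x hx => ?_) (fun x hx => ?_) ⟨ht, h⟩
      ⟨zero_le_one, le_rfl⟩ h
    · rwa [hgap_one] at this
    · rw [interior_Icc] at hx
      exact (hasDerivAt_pinskerGap hx.1).hasDerivWithinAt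
    · rw [interior_Icc] at hx
      exact hderiv_one ▸ monotoneOn_pinskerGapDeriv hx.1 (Set.mem_Ioi.2 one_pos) hx.2.le
  · have := monotoneOn_of_hasDerivWithinAt_nonneg (f' := pinskerGapDeriv) (convex_Ici 1)
      (hcont.mono (Set.Ici_subset_Ici.2 zero_le_one)) (fun x hx => ?_) (fun x hx => ?_)
      Set.self_mem_Ici h h
    · rwa [hgap_one] at this
    · rw [interior_Ici] at hx
      exact (hasDerivAt_pinskerGap (one_pos.trans hx)).hasDerivWithinAt
    · rw [interior_Ici] at hx
      exact hderiv_one ▸ monotoneOn_pinskerGapDeriv (Set.mem_Ioi.2 one_pos)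
        (Set.mem_Ioi.2 (one_pos.trans hx)) hx.le

theorem three_mul_sq_div_le_klFun {t : ℝ} (ht : 0 ≤ t) :
    3 * (t - 1) ^ 2 / (2 * (t + 2)) ≤ klFun t :=
  sub_nonneg.1 (pinskerGap_nonneg ht)

theorem three_mul_sq_sub_div_le_mul_log_div {q p : ℝ} (hq : 0 ≤ q) (hp : 0 < p) :
    3 * (q - p) ^ 2 / (2 * (q + 2 * p)) ≤ q * log (q / p) - q + p := by
  obtain ⟨t, ht, rfl⟩ : ∃ t, 0 ≤ t ∧ q = t * p :=
    ⟨q / p, div_nonneg hq hp.le, by field_simp⟩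
  calc 3 * (t * p - p) ^ 2 / (2 * (t * p + 2 * p))
        = p * (3 * (t - 1) ^ 2 / (2 * (t + 2))) := by field_simp
    _ ≤ p * klFun t := mul_le_mul_of_nonneg_left (three_mul_sq_div_le_klFun ht) hp.le
    _ = t * p * log (t * p / p) - t * p + p := by
        rw [klFun_apply, mul_div_cancel_right₀ _ hp.ne']
        ring

theorem sq_sum_abs_sub_le_two_mul_sum_mul_sum_mul_log_div {ι : Type*} [Fintype ι]
    {q p : ι → ℝ} (hq : ∀ i, 0 ≤ q i) (hp : ∀ i, 0 < p i) (hqp : ∑ i, q i = ∑ i, p i) :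
    (∑ i, |q i - p i|) ^ 2 ≤ 2 * (∑ i, q i) * ∑ i, q i * log (q i / p i) := by
  have hpos : ∀ i, 0 < q i + 2 * p i := fun i => by linarith [hq i, hp i]
  have hcs : (∑ i, |q i - p i|) ^ 2 ≤
      (∑ i, 3 * (q i - p i) ^ 2 / (2 * (q i + 2 * p i))) *
        ∑ i, 2 * (q i + 2 * p i) / 3 := by
    refine sum_sq_le_sum_mul_sum_of_sq_le_mul _ (fun i _ => by have := hpos i; positivity)
      (fun i _ => by have := hpos i; positivity) (fun i _ => le_of_eq ?_)
    rw [sq_abs, div_mul_div_comm, eq_div_iff (by have := hpos i; positivity)]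
    ring
  have hweights : ∑ i, 2 * (q i + 2 * p i) / 3 = 2 * ∑ i, q i := by
    simp only [← sum_div, ← mul_sum, sum_add_distrib, hqp]
    ring
  have hbound :
      ∑ i, 3 * (q i - p i) ^ 2 / (2 * (q i + 2 * p i)) ≤ ∑ i, q i * log (q i / p i) := by
    have := sum_le_sum fun i (_ : i ∈ univ) => three_mul_sq_sub_div_le_mul_log_div (hq i) (hp i)
    rw [sum_add_distrib, sum_sub_distrib, hqp] at this
    linarith
  have hq0 : 0 ≤ ∑ i, q i := sum_nonneg fun i _ => hq i
  rw [hweights] at hcs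
  nlinarith

section Uniform

variable {S : Type*} [Fintype S]

noncomputable def tvDistUniform (q : S → ℝ) : ℝ :=
  (1 / 2) * ∑ s, |q s - 1 / (Fintype.card S : ℝ)|

/-- For a mass vector `a` of total mass `b`, this is `b · KL(a / b ‖ Unif(S))`. -/
noncomputable def weightedKLUniform (a : S → ℝ) : ℝ :=
  ∑ s, a s * log (a s / ((∑ t, a t) / Fintype.card S))

variable [Nonempty S] {a : S → ℝ}

theorem sq_sum_abs_sub_le_mul_weightedKLUniform (ha : ∀ s, 0 ≤ a s) (hb : 0 < ∑ s, a s) :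
    (∑ s, |a s - (∑ t, a t) / Fintype.card S|) ^ 2 ≤
      2 * (∑ s, a s) * weightedKLUniform a := by
  have hN : (0 : ℝ) < Fintype.card S := Nat.cast_pos.2 Fintype.card_pos
  exact sq_sum_abs_sub_le_two_mul_sum_mul_sum_mul_log_div ha (fun _ => div_pos hb hN)
    (by simp [mul_div_cancel₀ _ hN.ne'])

theorem weightedKLUniform_nonneg (ha : ∀ s, 0 ≤ a s) : 0 ≤ weightedKLUniform a := by
  rcases (sum_nonneg fun s (_ : s ∈ univ) => ha s).eq_or_lt with hb | hb
  · have hzero := (sum_eq_zero_iff_of_nonneg fun s _ => ha s).1 hb.symm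
    simp [weightedKLUniform, hzero]
  · nlinarith [sq_nonneg (∑ s, |a s - (∑ t, a t) / Fintype.card S|),
      sq_sum_abs_sub_le_mul_weightedKLUniform ha hb]

theorem mul_tvDistUniform_div_sum_le (ha : ∀ s, 0 ≤ a s) :
    (∑ s, a s) * tvDistUniform (fun s => a s / ∑ t, a t) ≤
      √(∑ s, a s) * √(weightedKLUniform a / 2) := by
  rcases (sum_nonneg fun s _ => ha s).eq_or_lt with hb | hb
  · rw [← hb, zero_mul]
    positivity
  have htv : (∑ s, a s) * tvDistUniform (fun s => a s / ∑ t, a t) =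
      (1 / 2) * ∑ s, |a s - (∑ t, a t) / Fintype.card S| := by
    rw [tvDistUniform, mul_left_comm, mul_sum]
    congr 1
    refine sum_congr rfl fun s _ => ?_
    rw [← abs_of_pos hb, ← abs_mul, abs_of_pos hb]
    congr 1
    field_simp
  rw [htv, ← sqrt_mul hb.le]
  refine le_sqrt_of_sq_le ?_
  nlinarith [sq_sum_abs_sub_le_mul_weightedKLUniform ha hb]

theorem weightedKLUniform_eq (ha : ∀ s, 0 ≤ a s) :
    weightedKLUniform a = ∑ s, a s * log (a s) + (∑ s, a s) * log (Fintype.card S)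
      - (∑ s, a s) * log (∑ s, a s) := by
  have hN : (0 : ℝ) < Fintype.card S := Nat.cast_pos.2 Fintype.card_pos
  have hterm : ∀ s, a s * log (a s / ((∑ t, a t) / Fintype.card S)) =
      a s * log (a s) + a s * log (Fintype.card S) - a s * log (∑ t, a t) := by
    intro s
    rcases (ha s).eq_or_lt with h0 | hpos
    · simp [← h0]
    have hb : 0 < ∑ t, a t := hpos.trans_le (single_le_sum (fun t _ => ha t) (mem_univ s))
    rw [log_div hpos.ne' (by positivity), log_div hb.ne' hN.ne']
    ring
  simp only [weightedKLUniform, hterm, sum_sub_distrib, sum_add_distrib, ← sum_mul]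

end Uniform

section PrefixMasses

variable {S : Type*} [Fintype S] {m : ℕ} {A : (k : ℕ) → (Fin k → S) → ℝ} {P : ℝ}

theorem sum_eq_of_sum_snoc_eq (hcons : ∀ k < m, ∀ w, ∑ s, A (k + 1) (Fin.snoc w s) = A k w)
    (hP : A 0 Fin.elim0 = P) {k : ℕ} (hk : k ≤ m) : ∑ w, A k w = P := by
  induction k with
  | zero => rw [Fintype.sum_subsingleton _ Fin.elim0, hP]
  | succ k ih => rw [← Fin.sum_sum_snoc, sum_congr rfl fun w _ => hcons k hk w, ih (by omega)]

variable [Nonempty S]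

theorem sum_sum_weightedKLUniform_le (hA : ∀ k w, 0 ≤ A k w)
    (hcons : ∀ k < m, ∀ w, ∑ s, A (k + 1) (Fin.snoc w s) = A k w) (hP : A 0 Fin.elim0 = P)
    (hmax : ∀ v, A m v ≤ 1 / (Fintype.card S : ℝ) ^ m) :
    ∑ k ∈ range m, ∑ w : Fin k → S,
      weightedKLUniform (fun s => A (k + 1) (Fin.snoc w s)) ≤ P * log (1 / P) := by
  set G : ℕ → ℝ := fun k => ∑ w : Fin k → S, A k w * log (A k w)
  have hstep : ∀ k ∈ range m,
      ∑ w : Fin k → S, weightedKLUniform (fun s => A (k + 1) (Fin.snoc w s))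
        = G (k + 1) - G k + P * log (Fintype.card S) := by
    intro k hk
    have hk : k < m := mem_range.1 hk
    simp only [weightedKLUniform_eq fun s => hA _ _, hcons k hk, sum_add_distrib,
      sum_sub_distrib, ← sum_mul, sum_eq_of_sum_snoc_eq hcons hP hk.le,
      Fin.sum_sum_snoc (fun v => A (k + 1) v * log (A (k + 1) v)), G]
    ring
  have hG0 : G 0 = P * log P := by simp only [G, Fintype.sum_subsingleton _ Fin.elim0, hP]
  have hGm : G m ≤ P * log (1 / (Fintype.card S : ℝ) ^ m) := by
    simpa only [sum_eq_of_sum_snoc_eq hcons hP le_rfl] using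
      sum_mul_log_le_sum_mul_log_of_le (hA m) hmax
  rw [sum_congr rfl hstep, sum_add_distrib, sum_range_sub G, sum_const, card_range, nsmul_eq_mul]
  rw [one_div, log_inv, log_pow] at hGm
  rw [one_div, log_inv]
  linarith

theorem average_tvDistUniform_le (hm : 0 < m) (hA : ∀ k w, 0 ≤ A k w)
    (hcons : ∀ k < m, ∀ w, ∑ s, A (k + 1) (Fin.snoc w s) = A k w) (hP : A 0 Fin.elim0 = P)
    (hmax : ∀ v, A m v ≤ 1 / (Fintype.card S : ℝ) ^ m) (hP0 : 0 < P) :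
    (1 / m) * ∑ i : Fin m, ∑ w : Fin i → S,
      (A i w / P) * tvDistUniform (fun s => A (i + 1) (Fin.snoc w s) / A i w) ≤
        √(log (1 / P) / (2 * m)) := by
  set K : (i : Fin m) → (Fin i → S) → ℝ := fun i w =>
    weightedKLUniform (fun s => A (i + 1) (Fin.snoc w s)) / 2
  have hnode : ∀ (i : Fin m) w,
      A i w * tvDistUniform (fun s => A (i + 1) (Fin.snoc w s) / A i w) ≤
        √(A i w) * √(K i w) := by
    intro i w
    rw [← hcons i i.isLt w]
    exact mul_tvDistUniform_div_sum_le fun s => hA _ _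
  have hmass : ∑ i : Fin m, ∑ w : Fin i → S, A i w = m * P := by
    simp [sum_eq_of_sum_snoc_eq hcons hP (Fin.is_lt _).le]
  have hdiv : ∑ i : Fin m, ∑ w, K i w ≤ P * log (1 / P) / 2 := by
    simp only [K, ← sum_div]
    gcongr
    exact (Fin.sum_univ_eq_sum_range (fun k => ∑ w : Fin k → S,
      weightedKLUniform (fun s => A (k + 1) (Fin.snoc w s))) m).trans_le
      (sum_sum_weightedKLUniform_le hA hcons hP hmax)
  have hm' : (0 : ℝ) < m := Nat.cast_pos.2 hm
  calc (1 / m) * ∑ i : Fin m, ∑ w : Fin i → S,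
        (A i w / P) * tvDistUniform (fun s => A (i + 1) (Fin.snoc w s) / A i w)
      = (∑ i : Fin m, ∑ w : Fin i → S,
          A i w * tvDistUniform (fun s => A (i + 1) (Fin.snoc w s) / A i w)) / (m * P) := by
        simp only [mul_sum, sum_div]
        refine sum_congr rfl fun i _ => sum_congr rfl fun w _ => ?_
        field_simp
    _ ≤ √(m * P) * √(P * log (1 / P) / 2) / (m * P) := by
        gcongr
        calc _ ≤ ∑ i : Fin m, ∑ w : Fin i → S, √(A i w) * √(K i w) :=
              sum_le_sum fun i _ => sum_le_sum fun w _ => hnode i w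
          _ ≤ √(∑ i : Fin m, ∑ w : Fin i → S, A i w) * √(∑ i : Fin m, ∑ w, K i w) :=
              sum_sum_sqrt_mul_sqrt_le (fun _ _ => hA _ _)
                (fun i w => div_nonneg (weightedKLUniform_nonneg fun _ => hA _ _) zero_le_two)
          _ ≤ _ := by rw [hmass]; gcongr
    _ = √(log (1 / P) / (2 * m)) := by
        rw [sqrt_mul hm'.le, mul_div_assoc P, sqrt_mul hP0.le,
          show log (1 / P) / (2 * m) = log (1 / P) / 2 / m by ring, sqrt_div' _ hm'.le]
        field_simp
        rw [sq_sqrt hm'.le, sq_sqrt hP0.le]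
        ring

end PrefixMasses

section PrefixSets

variable {Ω S : Type*} {m : ℕ}

/-- `{X_{<k} = w}`; the guard `j < m` makes it meaningful for every `k : ℕ`. -/
def prefixSet (X : Ω → Fin m → S) (k : ℕ) (w : Fin k → S) : Set Ω :=
  {ω | ∀ (j : Fin k) (hj : (j : ℕ) < m), X ω ⟨j, hj⟩ = w j}

theorem prefixSet_zero (X : Ω → Fin m → S) (w : Fin 0 → S) : prefixSet X 0 w = Set.univ := by
  simp [prefixSet]

theorem prefixSet_val (X : Ω → Fin m → S) (i : Fin m) (w : Fin i → S) :
    prefixSet X i w = {ω | ∀ j : Fin i, X ω ⟨j, j.isLt.trans i.isLt⟩ = w j} := by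
  simp [prefixSet, fun j : Fin i => j.isLt.trans i.isLt]

theorem prefixSet_snoc (X : Ω → Fin m → S) {k : ℕ} (hk : k < m) (w : Fin k → S) (s : S) :
    prefixSet X (k + 1) (Fin.snoc w s) = prefixSet X k w ∩ {ω | X ω ⟨k, hk⟩ = s} := by
  ext ω
  simp only [prefixSet, Set.mem_inter_iff, Set.mem_ofPred_eq, Fin.forall_fin_succ',
    Fin.snoc_castSucc, Fin.snoc_last, Fin.val_castSucc, Fin.val_last]
  exact ⟨fun h => ⟨h.1, h.2 hk⟩, fun h => ⟨h.1, fun _ => h.2⟩⟩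

theorem prefixSet_self (X : Ω → Fin m → S) (v : Fin m → S) :
    prefixSet X m v = X ⁻¹' {v} := by
  ext ω
  simp [prefixSet, funext_iff]

theorem sum_measureReal_inter_prefixSet_snoc [MeasurableSpace Ω] [MeasurableSpace S]
    [MeasurableSingletonClass S] [Fintype S] (μ : Measure Ω) [IsFiniteMeasure μ]
    {X : Ω → Fin m → S} (hX : Measurable X) (D : Set Ω) {k : ℕ} (hk : k < m)
    (w : Fin k → S) :
    ∑ s, μ.real (D ∩ prefixSet X (k + 1) (Fin.snoc w s)) =
      μ.real (D ∩ prefixSet X k w) := by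
  have hXk : Measurable fun ω => X ω ⟨k, hk⟩ := (measurable_pi_apply _).comp hX
  have := sum_measureReal_preimage_singleton (μ := μ.restrict (D ∩ prefixSet X k w)) univ
    (fun s _ => hXk (measurableSet_singleton s))
  simp only [coe_univ, Set.preimage_univ, measureReal_restrict_apply_univ] at this
  rw [← this]
  refine sum_congr rfl fun s _ => ?_
  rw [measureReal_restrict_apply (hXk (measurableSet_singleton s)), prefixSet_snoc X hk,
    ← Set.inter_assoc, Set.inter_comm]
  rfl

end PrefixSets

theorem stmt4_general {Ω : Type*} [MeasurableSpace Ω] (μ : Measure Ω) [IsProbabilityMeasure μ]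
    {S : Type*} [Fintype S] [Nonempty S] [MeasurableSpace S] [MeasurableSingletonClass S]
    {m : ℕ} (hm : 0 < m)
    (X : Ω → Fin m → S) (hX : Measurable X)
    (hunif : ∀ v : Fin m → S, (μ {ω | X ω = v}).toReal = 1 / (Fintype.card S : ℝ) ^ m)
    (D : Set Ω)
    (ε : ℝ) (hε : 0 < ε) (hDε : ε ≤ (μ D).toReal) :
    (1 / m) * ∑ i : Fin m, ∑ w : Fin i.val → S,
        ((μ (D ∩ {ω | ∀ j : Fin i.val,
            X ω ⟨j.val, j.isLt.trans i.isLt⟩ = w j})).toReal / (μ D).toReal) *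
        ((1 / 2) * ∑ s : S,
          |(μ (D ∩ {ω | (∀ j : Fin i.val,
              X ω ⟨j.val, j.isLt.trans i.isLt⟩ = w j) ∧ X ω i = s})).toReal /
             (μ (D ∩ {ω | ∀ j : Fin i.val,
              X ω ⟨j.val, j.isLt.trans i.isLt⟩ = w j})).toReal
           - 1 / (Fintype.card S : ℝ)|)
    ≤ Real.sqrt (Real.logb 2 (1 / ε) / (2 * m)) := by
  have hPD : 0 < μ.real D := hε.trans_le hDε
  have hnext : ∀ (i : Fin m) (w : Fin i → S) (s : S),
      {ω | (∀ j : Fin i, X ω ⟨j, j.isLt.trans i.isLt⟩ = w j) ∧ X ω i = s}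
        = prefixSet X (i + 1) (Fin.snoc w s) := by
    intro i w s
    rw [prefixSet_snoc X i.isLt, prefixSet_val]
    rfl
  simp only [hnext, ← prefixSet_val]
  refine (average_tvDistUniform_le (A := fun k w => μ.real (D ∩ prefixSet X k w)) hm
    (fun _ _ => measureReal_nonneg)
    (fun k hk w => sum_measureReal_inter_prefixSet_snoc μ hX D hk w)
    (by simp [prefixSet_zero]) (fun v => ?_) hPD).trans ?_
  · rw [prefixSet_self, ← hunif v]
    exact measureReal_mono Set.inter_subset_right
  · gcongr
    calc log (1 / μ.real D) ≤ log (1 / ε) := by gcongr; exact hDε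
      _ ≤ logb 2 (1 / ε) := log_le_logb_two (one_le_one_div hε (hDε.trans measureReal_le_one))

theorem stmt4 {Ω : Type*} [MeasurableSpace Ω] (μ : Measure Ω) [IsProbabilityMeasure μ]
    {S : Type*} [Fintype S] [Nonempty S] [MeasurableSpace S] [MeasurableSingletonClass S]
    {m : ℕ} (hm : 0 < m)
    (X : Ω → Fin m → S) (hX : Measurable X)
    (hunif : ∀ v : Fin m → S, (μ {ω | X ω = v}).toReal = 1 / (Fintype.card S : ℝ) ^ m)
    (D : Set Ω) (hD : MeasurableSet D)
    (ε : ℝ) (hε : 0 < ε) (hDε : ε ≤ (μ D).toReal) :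
    (1 / m) * ∑ i : Fin m, ∑ w : Fin i.val → S,
        ((μ (D ∩ {ω | ∀ j : Fin i.val,
            X ω ⟨j.val, j.isLt.trans i.isLt⟩ = w j})).toReal / (μ D).toReal) *
        ((1 / 2) * ∑ s : S,
          |(μ (D ∩ {ω | (∀ j : Fin i.val,
              X ω ⟨j.val, j.isLt.trans i.isLt⟩ = w j) ∧ X ω i = s})).toReal /
             (μ (D ∩ {ω | ∀ j : Fin i.val,
              X ω ⟨j.val, j.isLt.trans i.isLt⟩ = w j})).toReal
           - 1 / (Fintype.card S : ℝ)|)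
    ≤ Real.sqrt (Real.logb 2 (1 / ε) / (2 * m)) :=
  stmt4_general μ hm X hX hunif D ε hε hDε
end

section
/- Let m be a positive integer and let Z = (Z_1,…,Z_m) be a random vector taking values in {0,1}^m with arbitrary joint distribution. Let η > 0, ε ∈ (0,1), and let D be any event on the same probability space such that D ⊆ {Σ_{i=1}^m Z_i ≤ ηm} and Pr(D) ≥ ε. Set β = √(2 ln(2/ε)/m). Then Pr( (1/m) Σ_{i=1}^m E[Z_i | Z_1,…,Z_{i−1}] > η + β | D ) ≤ 1/2, where E[Z_i | Z_1,…,Z_{i−1}] denotes the conditional expectation of Z_i given the first i−1 coordinates (with respect to the unconditioned distribution of Z). -/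
/-!
Let `w` be the law of `Z` on `{0,1}^m` and `S = ∑ᵢ (E[Zᵢ | Z_{<i}] - Zᵢ)`. Conditioning on the first
coordinate splits `S` into a centred Bernoulli term plus the same quantity for the law of the
remaining coordinates, so Hoeffding's lemma for a Bernoulli variable and induction on `m` give
`E[exp (t S)] ≤ exp (m t² / 2)`. By Markov's inequality `S ≥ β m` has probability at most
`exp (-β² m / 2) = ε / 2`. On `D` we have `∑ Zᵢ ≤ η m`, so on the event of the theorem `S > β m`;
dividing by `Pr(D) ≥ ε` gives `1/2`.
-/

open scoped Classical
open MeasureTheory Finset Real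

theorem sum_univ_fun_fin_succ {α M : Type*} [Fintype α] [AddCommMonoid M] {m : ℕ}
    (f : (Fin (m + 1) → α) → M) : ∑ z, f z = ∑ a, ∑ v, f (Fin.cons a v) := by
  rw [← Fintype.sum_prod_type']
  exact (Fintype.sum_equiv (Fin.consEquiv fun _ => α) _ _ (fun _ => rfl)).symm

lemma mul_exp_add_mul_exp_le {a b : ℝ} (ha : 0 ≤ a) (hb : 0 ≤ b) (t : ℝ) :
    a * exp (t * (a / (a + b) - 1)) + b * exp (t * (a / (a + b))) ≤ exp (t ^ 2 / 2) * (a + b) := by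
  rcases (add_nonneg ha hb).eq_or_lt with hab | hab
  · have ha0 : a = 0 := by linarith
    have hb0 : b = 0 := by linarith
    simp [ha0, hb0]
  set p := a / (a + b)
  have hpa : p * (a + b) = a := div_mul_cancel₀ a hab.ne'
  have hp0 : 0 ≤ p := by positivity
  have hp1 : p ≤ 1 := (div_le_one hab).2 (by linarith)
  -- `exp (t * x)` lies below the chord of `exp` over `[-t, t]`, and the mean of the chord is `cosh t`
  have chord : ∀ x : ℝ, -1 ≤ x → x ≤ 1 →
      exp (t * x) ≤ (1 + x) / 2 * exp t + (1 - x) / 2 * exp (-t) := by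
    intro x hx1 hx2
    have h := convexOn_exp.2 (Set.mem_univ t) (Set.mem_univ (-t))
      (by linarith : (0:ℝ) ≤ (1 + x) / 2) (by linarith : (0:ℝ) ≤ (1 - x) / 2) (by ring)
    simp only [smul_eq_mul] at h
    rwa [show (1 + x) / 2 * t + (1 - x) / 2 * -t = t * x by ring] at h
  have h1 := chord (p - 1) (by linarith) (by linarith)
  have h2 := chord p (by linarith) hp1
  have hcosh : p * exp (t * (p - 1)) + (1 - p) * exp (t * p) ≤ cosh t := by
    rw [cosh_eq]
    nlinarith [mul_le_mul_of_nonneg_left h1 hp0, mul_le_mul_of_nonneg_left h2 (sub_nonneg.2 hp1)]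
  calc a * exp (t * (p - 1)) + b * exp (t * p)
      = (p * exp (t * (p - 1)) + (1 - p) * exp (t * p)) * (a + b) := by
        linear_combination (exp (t * p) - exp (t * (p - 1))) * hpa
    _ ≤ exp (t ^ 2 / 2) * (a + b) := by
        gcongr; exact hcosh.trans (cosh_le_exp_half_sq t)

section PrefixWeights

variable {m : ℕ}

/-- `E[Zᵢ | Z_{<i} = u_{<i}]` for `Z` distributed according to the weights `w`; it is `0` when the
prefix has weight `0`. -/
noncomputable def prefixCondProb (w : (Fin m → Bool) → ℝ) (i : Fin m) (u : Fin m → Bool) : ℝ :=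
  (∑ z with (∀ j < i, z j = u j) ∧ z i = true, w z) / ∑ z with ∀ j < i, z j = u j, w z

/-- The martingale `∑ᵢ (E[Zᵢ | Z_{<i}] - Zᵢ)` at time `m`. -/
noncomputable def compensatorExcess (w : (Fin m → Bool) → ℝ) (u : Fin m → Bool) : ℝ :=
  ∑ i, (prefixCondProb w i u - if u i then 1 else 0)

lemma prefixCondProb_zero (w : (Fin (m + 1) → Bool) → ℝ) (u : Fin (m + 1) → Bool) :
    prefixCondProb w 0 u = (∑ v, w (Fin.cons true v)) / ∑ z, w z := by
  simp [prefixCondProb, Finset.sum_filter,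
    sum_univ_fun_fin_succ (fun z => if z 0 = true then w z else 0)]

lemma prefixCondProb_succ_cons (w : (Fin (m + 1) → Bool) → ℝ) (i : Fin m) (a : Bool)
    (v : Fin m → Bool) :
    prefixCondProb w i.succ (Fin.cons a v) = prefixCondProb (fun v' => w (Fin.cons a v')) i v := by
  simp only [prefixCondProb, Finset.sum_filter]
  rw [sum_univ_fun_fin_succ, sum_univ_fun_fin_succ]
  cases a <;> simp [Fin.forall_fin_succ, Fin.succ_lt_succ_iff]

lemma compensatorExcess_cons (w : (Fin (m + 1) → Bool) → ℝ) (a : Bool) (v : Fin m → Bool) :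
    compensatorExcess w (Fin.cons a v) =
      (∑ v, w (Fin.cons true v)) / (∑ z, w z) - (if a then 1 else 0) +
        compensatorExcess (fun v' => w (Fin.cons a v')) v := by
  simp only [compensatorExcess, Fin.sum_univ_succ, prefixCondProb_zero, prefixCondProb_succ_cons,
    Fin.cons_zero, Fin.cons_succ]

theorem sum_mul_exp_compensatorExcess_le (w : (Fin m → Bool) → ℝ) (hw : 0 ≤ w) (t : ℝ) :
    ∑ u, w u * exp (t * compensatorExcess w u) ≤ exp (m * t ^ 2 / 2) * ∑ u, w u := by
  induction m with
  | zero => simp [compensatorExcess]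
  | succ m ih =>
    set W : Bool → ℝ := fun a => ∑ v, w (Fin.cons a v)
    have htotal : ∑ z, w z = W true + W false := by rw [sum_univ_fun_fin_succ, Fintype.sum_bool]
    set p := W true / (W true + W false)
    have hslice (a : Bool) :
        ∑ v, w (Fin.cons a v) * exp (t * compensatorExcess w (Fin.cons a v)) ≤
          exp (m * t ^ 2 / 2) * (W a * exp (t * (p - if a then 1 else 0))) := by
      calc ∑ v, w (Fin.cons a v) * exp (t * compensatorExcess w (Fin.cons a v))
          = (∑ v, w (Fin.cons a v) * exp (t * compensatorExcess (fun v' => w (Fin.cons a v')) v))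
              * exp (t * (p - if a then 1 else 0)) := by
            simp only [compensatorExcess_cons, htotal, mul_add, exp_add, Finset.sum_mul]
            exact Finset.sum_congr rfl fun v _ => by ring
        _ ≤ exp (m * t ^ 2 / 2) * W a * exp (t * (p - if a then 1 else 0)) := by
            gcongr; exact ih _ fun v => hw _
        _ = _ := mul_assoc _ _ _
    calc ∑ u, w u * exp (t * compensatorExcess w u)
        ≤ ∑ a, exp (m * t ^ 2 / 2) * (W a * exp (t * (p - if a then 1 else 0))) := by
          rw [sum_univ_fun_fin_succ]; exact Finset.sum_le_sum fun a _ => hslice a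
      _ = exp (m * t ^ 2 / 2) * (W true * exp (t * (p - 1)) + W false * exp (t * p)) := by
          simp [mul_add]
      _ ≤ exp (m * t ^ 2 / 2) * (exp (t ^ 2 / 2) * (W true + W false)) := by
          gcongr
          exact mul_exp_add_mul_exp_le (Finset.sum_nonneg fun v _ => hw _)
            (Finset.sum_nonneg fun v _ => hw _) t
      _ = exp ((m + 1 : ℕ) * t ^ 2 / 2) * ∑ u, w u := by
          rw [htotal, ← mul_assoc, ← exp_add]; push_cast; ring_nf

theorem sum_filter_compensatorExcess_ge_le (w : (Fin m → Bool) → ℝ) (hw : 0 ≤ w) {β : ℝ}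
    (hβ : 0 ≤ β) :
    ∑ u with β * m ≤ compensatorExcess w u, w u ≤ exp (-(β ^ 2 * m) / 2) * ∑ u, w u := by
  calc ∑ u with β * m ≤ compensatorExcess w u, w u
      ≤ ∑ u, exp (-(β ^ 2 * m)) * (w u * exp (β * compensatorExcess w u)) := by
        rw [Finset.sum_filter]
        refine Finset.sum_le_sum fun u _ => ?_
        split_ifs with hu
        · rw [mul_left_comm, ← exp_add]
          refine le_mul_of_one_le_right (hw u) (one_le_exp ?_)
          nlinarith
        · exact mul_nonneg (exp_pos _).le (mul_nonneg (hw u) (exp_pos _).le)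
    _ ≤ exp (-(β ^ 2 * m)) * (exp (m * β ^ 2 / 2) * ∑ u, w u) := by
        rw [← Finset.mul_sum]; gcongr; exact sum_mul_exp_compensatorExcess_le w hw β
    _ = exp (-(β ^ 2 * m) / 2) * ∑ u, w u := by
        rw [← mul_assoc, ← exp_add]; ring_nf

end PrefixWeights

theorem measureReal_setOf_comp_eq_sum {Ω α : Type*} [MeasurableSpace Ω] [MeasurableSpace α]
    [Fintype α] [MeasurableSingletonClass α] (μ : Measure Ω) [IsFiniteMeasure μ] {Z : Ω → α}
    (hZ : Measurable Z) (P : α → Prop) [DecidablePred P] :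
    μ.real {ω | P (Z ω)} = ∑ a with P a, μ.real (Z ⁻¹' {a}) := by
  rw [sum_measureReal_preimage_singleton _ fun a _ => hZ (measurableSet_singleton a)]
  congr; ext; simp

theorem stmt6_general {Ω : Type*} [MeasurableSpace Ω] (μ : Measure Ω) [IsProbabilityMeasure μ]
    {m : ℕ} (hm : 0 < m)
    (Z : Ω → Fin m → Bool) (hZ : Measurable Z)
    (η ε : ℝ) (hε0 : 0 < ε) (hε1 : ε < 1)
    (D : Set Ω)
    (hDsub : D ⊆
      {ω | ((Finset.univ.filter (fun i : Fin m => Z ω i = true)).card : ℝ) ≤ η * m})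
    (hDε : ε ≤ (μ D).toReal) :
    (μ (D ∩ {ω | η + Real.sqrt (2 * Real.log (2 / ε) / m) <
        (1 / m) * ∑ i : Fin m,
          (μ {ω' | (∀ j : Fin m, j < i → Z ω' j = Z ω j) ∧ Z ω' i = true}).toReal /
            (μ {ω' | ∀ j : Fin m, j < i → Z ω' j = Z ω j}).toReal})).toReal /
      (μ D).toReal ≤ 1 / 2 := by
  set β := Real.sqrt (2 * Real.log (2 / ε) / m)
  set w : (Fin m → Bool) → ℝ := fun u => μ.real (Z ⁻¹' {u})
  have hlaw := measureReal_setOf_comp_eq_sum μ hZ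
  have hw1 : ∑ u, w u = 1 := by simpa using (hlaw fun _ => True).symm
  have hcondProb (ω : Ω) (i : Fin m) :
      (μ {ω' | (∀ j : Fin m, j < i → Z ω' j = Z ω j) ∧ Z ω' i = true}).toReal /
        (μ {ω' | ∀ j : Fin m, j < i → Z ω' j = Z ω j}).toReal = prefixCondProb w i (Z ω) := by
    rw [prefixCondProb, ← hlaw, ← hlaw]; rfl
  have hbad : D ∩ {ω | η + β < (1 / m) * ∑ i : Fin m,
        (μ {ω' | (∀ j : Fin m, j < i → Z ω' j = Z ω j) ∧ Z ω' i = true}).toReal /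
          (μ {ω' | ∀ j : Fin m, j < i → Z ω' j = Z ω j}).toReal} ⊆
      {ω | β * m ≤ compensatorExcess w (Z ω)} := by
    rintro ω ⟨hωD, hω⟩
    have hcount := hDsub hωD
    simp only [Set.mem_ofPred_eq, hcondProb, Finset.card_filter, Nat.cast_sum, Nat.cast_ite,
      Nat.cast_one, Nat.cast_zero] at hcount hω ⊢
    rw [compensatorExcess, Finset.sum_sub_distrib]
    rw [one_div_mul_eq_div, lt_div_iff₀ (Nat.cast_pos.2 hm)] at hω
    linarith
  have hlog : 0 ≤ Real.log (2 / ε) := Real.log_nonneg (by rw [le_div_iff₀ hε0]; linarith)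
  have htail : exp (-(β ^ 2 * m) / 2) = ε / 2 := by
    rw [Real.sq_sqrt (by positivity), div_mul_cancel₀ _ (by positivity : (m : ℝ) ≠ 0),
      show -(2 * Real.log (2 / ε)) / 2 = -Real.log (2 / ε) by ring, exp_neg,
      exp_log (by positivity), inv_div]
  rw [div_le_iff₀ (hε0.trans_le hDε)]
  calc _ ≤ μ.real {ω | β * m ≤ compensatorExcess w (Z ω)} := measureReal_mono hbad
    _ ≤ ε / 2 := by
        rw [hlaw (fun u => β * m ≤ compensatorExcess w u), ← htail, ← mul_one (exp _), ← hw1]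
        exact sum_filter_compensatorExcess_ge_le w (fun _ => measureReal_nonneg)
          (Real.sqrt_nonneg _)
    _ ≤ 1 / 2 * (μ D).toReal := by linarith

theorem stmt6 {Ω : Type*} [MeasurableSpace Ω] (μ : Measure Ω) [IsProbabilityMeasure μ]
    {m : ℕ} (hm : 0 < m)
    (Z : Ω → Fin m → Bool) (hZ : Measurable Z)
    (η ε : ℝ) (hη : 0 < η) (hε0 : 0 < ε) (hε1 : ε < 1)
    (D : Set Ω) (hDm : MeasurableSet D)
    (hDsub : D ⊆
      {ω | ((Finset.univ.filter (fun i : Fin m => Z ω i = true)).card : ℝ) ≤ η * m})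
    (hDε : ε ≤ (μ D).toReal) :
    (μ (D ∩ {ω | η + Real.sqrt (2 * Real.log (2 / ε) / m) <
        (1 / m) * ∑ i : Fin m,
          (μ {ω' | (∀ j : Fin m, j < i → Z ω' j = Z ω j) ∧ Z ω' i = true}).toReal /
            (μ {ω' | ∀ j : Fin m, j < i → Z ω' j = Z ω j}).toReal})).toReal /
      (μ D).toReal ≤ 1 / 2 :=
  stmt6_general μ hm Z hZ η ε hε0 hε1 D hDsub hDε
end

section
/- Let d_A, d_B be positive integers and δ, ν, η > 0. For each x ∈ {0,1,2} and y ∈ {0,1}, let ρ^{xy} be a density matrix on ℂ^{d_A} ⊗ ℂ^{d_B}. Let ρ_A := (1/6) Σ_{x,y} Tr_B(ρ^{xy}) and ρ_B := (1/6) Σ_{x,y} Tr_A(ρ^{xy}). Suppose: (1) (1/6) Σ_{x,y} ‖ρ_A − Tr_B(ρ^{xy})‖₁ ≤ ν and (1/6) Σ_{x,y} ‖ρ_B − Tr_A(ρ^{xy})‖₁ ≤ ν; (2) there exist, for each x ∈ {0,1,2}, positive semidefinite matrices A_x^0, A_x^1 on ℂ^{d_A} with A_x^0 + A_x^1 = Id,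 and for each y ∈ {0,1}, positive semidefinite matrices B_y^0, B_y^1 on ℂ^{d_B} with B_y^0 + B_y^1 = Id, such that, writing A_x := A_x^0 − A_x^1 and B_y := B_y^0 − B_y^1, one has (1/4)( Tr((A_0 ⊗ B_0) ρ^{00}) + Tr((A_0 ⊗ B_1) ρ^{01}) + Tr((A_1 ⊗ B_0) ρ^{10}) − Tr((A_1 ⊗ B_1) ρ^{11}) ) ≥ √2/2 − η; and (3) there exists b₁ ∈ {0,1} such that Tr((Id ⊗ B_1^{b₁}) ρ^{21}) ≥ 1 − δ. Then δ ≥ ( (√2 − 1)/2 − η ) − 75ν. -/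
open scoped Classical BigOperators Kronecker ComplexOrder
open Matrix

/-- Partial trace over the second tensor factor. -/
noncomputable def ptraceB {dA dB : ℕ}
    (ρ : Matrix (Fin dA × Fin dB) (Fin dA × Fin dB) ℂ) : Matrix (Fin dA) (Fin dA) ℂ :=
  fun i j => ∑ k : Fin dB, ρ (i, k) (j, k)

/-- Partial trace over the first tensor factor. -/
noncomputable def ptraceA {dA dB : ℕ}
    (ρ : Matrix (Fin dA × Fin dB) (Fin dA × Fin dB) ℂ) : Matrix (Fin dB) (Fin dB) ℂ :=
  fun i j => ∑ k : Fin dA, ρ (k, i) (k, j)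

/-- The trace norm (Schatten 1-norm) of a complex square matrix: `Tr √(M M†)`. -/
noncomputable def traceNorm {n : Type*} [Fintype n] [DecidableEq n]
    (M : Matrix n n ℂ) : ℝ :=
  ((((Matrix.posSemidef_self_mul_conjTranspose M).1.eigenvectorUnitary : Matrix n n ℂ)
      * Matrix.diagonal (fun i => ((√((Matrix.posSemidef_self_mul_conjTranspose M).1.eigenvalues i) : ℝ) : ℂ))
      * (star (Matrix.posSemidef_self_mul_conjTranspose M).1.eigenvectorUnitary : Matrix n n ℂ)).trace).re

/-! The guess condition says that Bob's observable `B_1` is almost deterministic on `ρ^{21}`.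
Expectations of an observable `-1 ≤ c ≤ 1` on two states differ by at most their trace distance,
so by the closeness of Bob's marginals `B_1` is almost deterministic on `ρ^{01}` and `ρ^{11}` too.
Each CHSH term is bounded through a local inequality `(1 ± a) ⊗ (1 ± b) ⪰ 0`; with the signs chosen
according to the value of `B_1`, the closeness of both parties' marginals makes all marginal terms
cancel up to `O(ν)`. Hence the CHSH sum is at most `2 + 4δ + 60ν`, against `2√2 - 4η` assumed. -/

section Observable
variable {n : Type*} [DecidableEq n]

def IsObservable (a : Matrix n n ℂ) : Prop :=
  (1 - a).PosSemidef ∧ (1 + a).PosSemidef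

theorem IsObservable.neg {a : Matrix n n ℂ} (ha : IsObservable a) : IsObservable (-a) :=
  ⟨by simpa [sub_neg_eq_add] using ha.2, by simpa [← sub_eq_add_neg] using ha.1⟩

theorem isObservable_sub {P Q : Matrix n n ℂ} (hP : P.PosSemidef) (hQ : Q.PosSemidef)
    (hPQ : P + Q = 1) : IsObservable (P - Q) :=
  ⟨by rw [← hPQ, add_sub_sub_cancel]; exact hQ.add hQ,
    by rw [← hPQ, add_add_sub_cancel]; exact hP.add hP⟩

end Observable

section TraceNorm
open scoped MatrixOrder
variable {n : Type*} [Fintype n] [DecidableEq n]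

theorem traceNorm_eq_re_trace_abs (M : Matrix n n ℂ) :
    traceNorm M = (CFC.abs Mᴴ).trace.re := by
  rw [CFC.abs, star_eq_conjTranspose, conjTranspose_conjTranspose,
    CFC.sqrt_eq_real_sqrt _ (posSemidef_self_mul_conjTranspose M).nonneg, cfcₙ_eq_cfc,
    (posSemidef_self_mul_conjTranspose M).1.cfc_eq]
  rfl

theorem traceNorm_nonneg (M : Matrix n n ℂ) : 0 ≤ traceNorm M := by
  rw [traceNorm_eq_re_trace_abs]
  exact (Complex.nonneg_iff.mp (CFC.abs_nonneg _).posSemidef.trace_nonneg).1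

theorem re_trace_mul_nonneg {P Q : Matrix n n ℂ} (hP : P.PosSemidef) (hQ : Q.PosSemidef) :
    0 ≤ (P * Q).trace.re := by
  obtain ⟨B, rfl⟩ := CStarAlgebra.nonneg_iff_eq_star_mul_self.mp hP.nonneg
  rw [Matrix.mul_assoc, trace_mul_comm, star_eq_conjTranspose]
  exact (Complex.nonneg_iff.mp (hQ.mul_mul_conjTranspose_same B).trace_nonneg).1

theorem re_trace_mul_le_traceNorm {c X : Matrix n n ℂ} (hc : IsObservable c)
    (hX : X.IsHermitian) : (c * X).trace.re ≤ traceNorm X := by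
  have hP := (CFC.posPart_nonneg X).posSemidef
  have hN := (CFC.negPart_nonneg X).posSemidef
  have h1 := re_trace_mul_nonneg hc.1 hP
  have h2 := re_trace_mul_nonneg hc.2 hN
  rw [traceNorm_eq_re_trace_abs, hX.eq, ← CFC.posPart_add_negPart X hX]
  nth_rw 1 [← CFC.posPart_sub_negPart X hX]
  simp only [Matrix.sub_mul, Matrix.add_mul, Matrix.mul_sub, Matrix.one_mul, trace_sub, trace_add,
    Complex.sub_re, Complex.add_re] at h1 h2 ⊢
  linarith

theorem re_trace_mul_sub_le {c ω σ τ : Matrix n n ℂ} (hc : IsObservable c)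
    (hω : ω.IsHermitian) (hσ : σ.IsHermitian) (hτ : τ.IsHermitian) {ε : ℝ}
    (hωσ : traceNorm (ω - σ) ≤ ε) (hωτ : traceNorm (ω - τ) ≤ ε) :
    (c * σ).trace.re - (c * τ).trace.re ≤ 2 * ε := by
  have h₁ := re_trace_mul_le_traceNorm hc (hω.sub hτ)
  have h₂ := re_trace_mul_le_traceNorm hc.neg (hω.sub hσ)
  simp only [Matrix.mul_sub, Matrix.neg_mul, trace_sub, trace_neg, Complex.sub_re,
    Complex.neg_re] at h₁ h₂
  linarith

end TraceNorm

section Kronecker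
variable {m n : Type*}

theorem Matrix.neg_kronecker (a : Matrix m m ℂ) (b : Matrix n n ℂ) : (-a) ⊗ₖ b = -(a ⊗ₖ b) := by
  ext ⟨i, k⟩ ⟨j, l⟩
  simp

theorem Matrix.kronecker_neg (a : Matrix m m ℂ) (b : Matrix n n ℂ) : a ⊗ₖ (-b) = -(a ⊗ₖ b) := by
  ext ⟨i, k⟩ ⟨j, l⟩
  simp

variable [Fintype m] [DecidableEq m] [Fintype n] [DecidableEq n]

theorem neg_re_trace_kronecker_mul_le {a : Matrix m m ℂ} {b : Matrix n n ℂ}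
    {ρ : Matrix (m × n) (m × n) ℂ} (ha : IsObservable a) (hb : IsObservable b)
    (hρ : ρ.PosSemidef) (htr : ρ.trace = 1) :
    -((a ⊗ₖ b) * ρ).trace.re ≤ 1 + ((a ⊗ₖ 1) * ρ).trace.re + ((1 ⊗ₖ b) * ρ).trace.re := by
  have h := re_trace_mul_nonneg (ha.2.kronecker hb.2) hρ
  simp only [add_kronecker, kronecker_add, one_kronecker_one, Matrix.add_mul, Matrix.one_mul,
    trace_add, Complex.add_re, htr, Complex.one_re] at h
  linarith

theorem re_trace_one_kronecker_sub_mul {P Q : Matrix n n ℂ} (hPQ : P + Q = 1)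
    {ρ : Matrix (m × n) (m × n) ℂ} (htr : ρ.trace = 1) :
    ((1 ⊗ₖ (P - Q)) * ρ).trace.re = 2 * ((1 ⊗ₖ P) * ρ).trace.re - 1 := by
  have hsum : (1 : Matrix m m ℂ) ⊗ₖ (P - Q) + 1 ⊗ₖ 1 = 1 ⊗ₖ P + 1 ⊗ₖ P := by
    rw [← kronecker_add, ← kronecker_add, ← hPQ, sub_add_add_cancel]
  have h := congrArg (fun M => (M * ρ).trace.re) hsum
  simp only [one_kronecker_one, Matrix.add_mul, Matrix.one_mul, trace_add, Complex.add_re, htr,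
    Complex.one_re] at h
  linarith

end Kronecker

section PartialTrace
variable {dA dB : ℕ}

theorem trace_one_kronecker_mul (b : Matrix (Fin dB) (Fin dB) ℂ)
    (ρ : Matrix (Fin dA × Fin dB) (Fin dA × Fin dB) ℂ) :
    ((1 ⊗ₖ b) * ρ).trace = (b * ptraceA ρ).trace := by
  simp only [trace, diag, mul_apply, kronecker_apply, one_apply, ptraceA, Fintype.sum_prod_type,
    ite_mul, one_mul, zero_mul, Finset.sum_ite_irrel, Finset.sum_const_zero, Finset.sum_ite_eq,
    Finset.mem_univ, if_true, Finset.mul_sum]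
  rw [Finset.sum_comm]
  exact Finset.sum_congr rfl fun _ _ => Finset.sum_comm

theorem trace_kronecker_one_mul (a : Matrix (Fin dA) (Fin dA) ℂ)
    (ρ : Matrix (Fin dA × Fin dB) (Fin dA × Fin dB) ℂ) :
    ((a ⊗ₖ 1) * ρ).trace = (a * ptraceB ρ).trace := by
  simp only [trace, diag, mul_apply, kronecker_apply, one_apply, ptraceB, Fintype.sum_prod_type,
    mul_ite, mul_one, mul_zero, ite_mul, zero_mul, Finset.sum_ite_eq, Finset.mem_univ, if_true,
    Finset.mul_sum]
  exact Finset.sum_congr rfl fun _ _ => Finset.sum_comm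

theorem Matrix.IsHermitian.ptraceA {ρ : Matrix (Fin dA × Fin dB) (Fin dA × Fin dB) ℂ}
    (hρ : ρ.IsHermitian) : (ptraceA ρ).IsHermitian := by
  ext i j
  simp only [conjTranspose_apply, _root_.ptraceA, star_sum, hρ.apply]

theorem Matrix.IsHermitian.ptraceB {ρ : Matrix (Fin dA × Fin dB) (Fin dA × Fin dB) ℂ}
    (hρ : ρ.IsHermitian) : (ptraceB ρ).IsHermitian := by
  ext i j
  simp only [conjTranspose_apply, _root_.ptraceB, star_sum, hρ.apply]

end PartialTrace

section CHSH
variable {dA dB : ℕ}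

def chshValue (ρ : Fin 3 → Fin 2 → Matrix (Fin dA × Fin dB) (Fin dA × Fin dB) ℂ)
    (a : Fin 3 → Matrix (Fin dA) (Fin dA) ℂ) (b : Fin 2 → Matrix (Fin dB) (Fin dB) ℂ) : ℝ :=
  (((a 0 ⊗ₖ b 0) * ρ 0 0).trace + ((a 0 ⊗ₖ b 1) * ρ 0 1).trace
    + ((a 1 ⊗ₖ b 0) * ρ 1 0).trace - ((a 1 ⊗ₖ b 1) * ρ 1 1).trace).re

theorem chshValue_neg (ρ : Fin 3 → Fin 2 → Matrix (Fin dA × Fin dB) (Fin dA × Fin dB) ℂ)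
    (a : Fin 3 → Matrix (Fin dA) (Fin dA) ℂ) (b : Fin 2 → Matrix (Fin dB) (Fin dB) ℂ) :
    chshValue ρ (-a) (-b) = chshValue ρ a b := by
  simp only [chshValue, Pi.neg_apply, neg_kronecker, kronecker_neg, neg_neg]

theorem chshValue_le_of_guess
    {ρ : Fin 3 → Fin 2 → Matrix (Fin dA × Fin dB) (Fin dA × Fin dB) ℂ}
    (hρ : ∀ x y, (ρ x y).PosSemidef ∧ (ρ x y).trace = 1)
    {a : Fin 3 → Matrix (Fin dA) (Fin dA) ℂ} {b : Fin 2 → Matrix (Fin dB) (Fin dB) ℂ}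
    (ha : ∀ x, IsObservable (a x)) (hb : ∀ y, IsObservable (b y))
    {ωA : Matrix (Fin dA) (Fin dA) ℂ} {ωB : Matrix (Fin dB) (Fin dB) ℂ}
    (hωA : ωA.IsHermitian) (hωB : ωB.IsHermitian) {ε δ : ℝ}
    (hA : ∀ x y, traceNorm (ωA - ptraceB (ρ x y)) ≤ ε)
    (hB : ∀ x y, traceNorm (ωB - ptraceA (ρ x y)) ≤ ε)
    (hguess : 1 - 2 * δ ≤ ((1 ⊗ₖ b 1) * ρ 2 1).trace.re) :
    chshValue ρ a b ≤ 2 + 4 * δ + 10 * ε := by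
  have hρH x y : (ρ x y).IsHermitian := (hρ x y).1.isHermitian
  have nsA {c} (hc : IsObservable c) x y x' y' :=
    re_trace_mul_sub_le hc hωA (hρH x y).ptraceB (hρH x' y').ptraceB (hA x y) (hA x' y')
  have nsB {c} (hc : IsObservable c) x y x' y' :=
    re_trace_mul_sub_le hc hωB (hρH x y).ptraceA (hρH x' y').ptraceA (hB x y) (hB x' y')
  -- Signs chosen so that each marginal term appears once with each sign, except the two `B_1`
  -- terms, which the guess condition controls.
  have loc00 := neg_re_trace_kronecker_mul_le (ha 0).neg (hb 0) (hρ 0 0).1 (hρ 0 0).2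
  have loc01 := neg_re_trace_kronecker_mul_le (ha 0) (hb 1).neg (hρ 0 1).1 (hρ 0 1).2
  have loc10 := neg_re_trace_kronecker_mul_le (ha 1) (hb 0).neg (hρ 1 0).1 (hρ 1 0).2
  have loc11 := neg_re_trace_kronecker_mul_le (ha 1).neg (hb 1).neg (hρ 1 1).1 (hρ 1 1).2
  simp only [neg_kronecker, kronecker_neg, neg_neg, Matrix.neg_mul, trace_neg, Complex.neg_re,
    trace_kronecker_one_mul, trace_one_kronecker_mul] at loc00 loc01 loc10 loc11 hguess
  simp only [chshValue, Complex.add_re, Complex.sub_re]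
  linarith [nsA (ha 0) 0 1 0 0, nsA (ha 1) 1 0 1 1, nsB (hb 0) 0 0 1 0, nsB (hb 1) 2 1 0 1,
    nsB (hb 1) 2 1 1 1]

theorem chshValue_sub_le_of_guess
    {ρ : Fin 3 → Fin 2 → Matrix (Fin dA × Fin dB) (Fin dA × Fin dB) ℂ}
    (hρ : ∀ x y, (ρ x y).PosSemidef ∧ (ρ x y).trace = 1)
    {A0 A1 : Fin 3 → Matrix (Fin dA) (Fin dA) ℂ} {B0 B1 : Fin 2 → Matrix (Fin dB) (Fin dB) ℂ}
    (hA : ∀ x, (A0 x).PosSemidef ∧ (A1 x).PosSemidef ∧ A0 x + A1 x = 1)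
    (hB : ∀ y, (B0 y).PosSemidef ∧ (B1 y).PosSemidef ∧ B0 y + B1 y = 1)
    {ωA : Matrix (Fin dA) (Fin dA) ℂ} {ωB : Matrix (Fin dB) (Fin dB) ℂ}
    (hωA : ωA.IsHermitian) (hωB : ωB.IsHermitian) {ε δ : ℝ}
    (hεA : ∀ x y, traceNorm (ωA - ptraceB (ρ x y)) ≤ ε)
    (hεB : ∀ x y, traceNorm (ωB - ptraceA (ρ x y)) ≤ ε)
    (hguess : ∃ b₁ : Fin 2, 1 - δ ≤ ((1 ⊗ₖ (if b₁ = 0 then B0 1 else B1 1)) * ρ 2 1).trace.re) :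
    chshValue ρ (fun x => A0 x - A1 x) (fun y => B0 y - B1 y) ≤ 2 + 4 * δ + 10 * ε := by
  have ha x := isObservable_sub (hA x).1 (hA x).2.1 (hA x).2.2
  have hb y := isObservable_sub (hB y).1 (hB y).2.1 (hB y).2.2
  obtain ⟨b₁, hb₁⟩ := hguess
  by_cases hb₁0 : b₁ = 0
  · rw [if_pos hb₁0] at hb₁
    refine chshValue_le_of_guess hρ ha hb hωA hωB hεA hεB ?_
    rw [re_trace_one_kronecker_sub_mul (hB 1).2.2 (hρ 2 1).2]
    linarith
  · rw [if_neg hb₁0] at hb₁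
    rw [← chshValue_neg]
    refine chshValue_le_of_guess hρ (fun x => (ha x).neg) (fun y => (hb y).neg) hωA hωB hεA hεB ?_
    rw [neg_sub, re_trace_one_kronecker_sub_mul (add_comm (B0 1) _ ▸ (hB 1).2.2) (hρ 2 1).2]
    linarith

end CHSH

theorem le_of_sum_sum_le {ι κ : Type*} [Fintype ι] [Fintype κ] {f : ι → κ → ℝ}
    (hf : ∀ i j, 0 ≤ f i j) {c : ℝ} (h : ∑ i, ∑ j, f i j ≤ c) (i : ι) (j : κ) : f i j ≤ c :=
  calc f i j ≤ ∑ j', f i j' := Finset.single_le_sum (fun j' _ => hf i j') (Finset.mem_univ j)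
    _ ≤ ∑ i', ∑ j', f i' j' :=
      Finset.single_le_sum (fun i' _ => Finset.sum_nonneg fun j' _ => hf i' j') (Finset.mem_univ i)
    _ ≤ c := h

theorem stmt8_general {dA dB : ℕ}
    (δ ν η : ℝ)
    (ρ : Fin 3 → Fin 2 → Matrix (Fin dA × Fin dB) (Fin dA × Fin dB) ℂ)
    (hρ : ∀ x y, (ρ x y).PosSemidef ∧ (ρ x y).trace = 1)
    -- condition (1): the marginals are on average ν-close to the average marginals
    (hnsA : (1 / 6 : ℝ) * ∑ x : Fin 3, ∑ y : Fin 2,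
        traceNorm ((6 : ℂ)⁻¹ • (∑ x' : Fin 3, ∑ y' : Fin 2, ptraceB (ρ x' y'))
          - ptraceB (ρ x y)) ≤ ν)
    (hnsB : (1 / 6 : ℝ) * ∑ x : Fin 3, ∑ y : Fin 2,
        traceNorm ((6 : ℂ)⁻¹ • (∑ x' : Fin 3, ∑ y' : Fin 2, ptraceA (ρ x' y'))
          - ptraceA (ρ x y)) ≤ ν)
    -- condition (2): binary measurements violating CHSH
    (A0 A1 : Fin 3 → Matrix (Fin dA) (Fin dA) ℂ)
    (B0 B1 : Fin 2 → Matrix (Fin dB) (Fin dB) ℂ)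
    (hA : ∀ x, (A0 x).PosSemidef ∧ (A1 x).PosSemidef ∧ A0 x + A1 x = 1)
    (hB : ∀ y, (B0 y).PosSemidef ∧ (B1 y).PosSemidef ∧ B0 y + B1 y = 1)
    (hchsh : Real.sqrt 2 / 2 - η ≤ (1 / 4) *
        ((((A0 0 - A1 0) ⊗ₖ (B0 0 - B1 0)) * ρ 0 0).trace
          + (((A0 0 - A1 0) ⊗ₖ (B0 1 - B1 1)) * ρ 0 1).trace
          + (((A0 1 - A1 1) ⊗ₖ (B0 0 - B1 0)) * ρ 1 0).trace
          - (((A0 1 - A1 1) ⊗ₖ (B0 1 - B1 1)) * ρ 1 1).trace).re)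
    -- condition (3): Bob's measurement `B_1` has a near-deterministic outcome on `ρ^{21}`
    (hguess : ∃ b₁ : Fin 2,
        1 - δ ≤ ((((1 : Matrix (Fin dA) (Fin dA) ℂ)
          ⊗ₖ (if b₁ = 0 then B0 1 else B1 1)) * ρ 2 1).trace).re) :
    (Real.sqrt 2 - 1) / 2 - η - 75 * ν ≤ δ := by
  set ωA := (6 : ℂ)⁻¹ • ∑ x, ∑ y, ptraceB (ρ x y)
  set ωB := (6 : ℂ)⁻¹ • ∑ x, ∑ y, ptraceA (ρ x y)
  have hρH x y : (ρ x y).IsHermitian := (hρ x y).1.isHermitian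
  have hωA : ωA.IsHermitian := IsHermitian.smul (isSelfAdjoint_sum _ fun x _ =>
    isSelfAdjoint_sum _ fun y _ => (hρH x y).ptraceB) (IsSelfAdjoint.ofNat 6).inv₀
  have hωB : ωB.IsHermitian := IsHermitian.smul (isSelfAdjoint_sum _ fun x _ =>
    isSelfAdjoint_sum _ fun y _ => (hρH x y).ptraceA) (IsSelfAdjoint.ofNat 6).inv₀
  have hεA : ∀ x y, traceNorm (ωA - ptraceB (ρ x y)) ≤ 6 * ν :=
    le_of_sum_sum_le (fun _ _ => traceNorm_nonneg _) (by linarith)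
  have hεB : ∀ x y, traceNorm (ωB - ptraceA (ρ x y)) ≤ 6 * ν :=
    le_of_sum_sum_le (fun _ _ => traceNorm_nonneg _) (by linarith)
  have hν : 0 ≤ ν := by linarith [traceNorm_nonneg (ωA - ptraceB (ρ 0 0)), hεA 0 0]
  have hclassical := chshValue_sub_le_of_guess hρ hA hB hωA hωB hεA hεB hguess
  change _ ≤ 1 / 4 * chshValue ρ (fun x => A0 x - A1 x) (fun y => B0 y - B1 y) at hchsh
  linarith

theorem stmt8 {dA dB : ℕ} (hdA : 0 < dA) (hdB : 0 < dB)
    (δ ν η : ℝ) (hδ : 0 < δ) (hν : 0 < ν) (hη : 0 < η)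
    (ρ : Fin 3 → Fin 2 → Matrix (Fin dA × Fin dB) (Fin dA × Fin dB) ℂ)
    (hρ : ∀ x y, (ρ x y).PosSemidef ∧ (ρ x y).trace = 1)
    -- condition (1): the marginals are on average ν-close to the average marginals
    (hnsA : (1 / 6 : ℝ) * ∑ x : Fin 3, ∑ y : Fin 2,
        traceNorm ((6 : ℂ)⁻¹ • (∑ x' : Fin 3, ∑ y' : Fin 2, ptraceB (ρ x' y'))
          - ptraceB (ρ x y)) ≤ ν)
    (hnsB : (1 / 6 : ℝ) * ∑ x : Fin 3, ∑ y : Fin 2,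
        traceNorm ((6 : ℂ)⁻¹ • (∑ x' : Fin 3, ∑ y' : Fin 2, ptraceA (ρ x' y'))
          - ptraceA (ρ x y)) ≤ ν)
    -- condition (2): binary measurements violating CHSH
    (A0 A1 : Fin 3 → Matrix (Fin dA) (Fin dA) ℂ)
    (B0 B1 : Fin 2 → Matrix (Fin dB) (Fin dB) ℂ)
    (hA : ∀ x, (A0 x).PosSemidef ∧ (A1 x).PosSemidef ∧ A0 x + A1 x = 1)
    (hB : ∀ y, (B0 y).PosSemidef ∧ (B1 y).PosSemidef ∧ B0 y + B1 y = 1)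
    (hchsh : Real.sqrt 2 / 2 - η ≤ (1 / 4) *
        ((((A0 0 - A1 0) ⊗ₖ (B0 0 - B1 0)) * ρ 0 0).trace
          + (((A0 0 - A1 0) ⊗ₖ (B0 1 - B1 1)) * ρ 0 1).trace
          + (((A0 1 - A1 1) ⊗ₖ (B0 0 - B1 0)) * ρ 1 0).trace
          - (((A0 1 - A1 1) ⊗ₖ (B0 1 - B1 1)) * ρ 1 1).trace).re)
    -- condition (3): Bob's measurement `B_1` has a near-deterministic outcome on `ρ^{21}`
    (hguess : ∃ b₁ : Fin 2,
        1 - δ ≤ ((((1 : Matrix (Fin dA) (Fin dA) ℂ)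
          ⊗ₖ (if b₁ = 0 then B0 1 else B1 1)) * ρ 2 1).trace).re) :
    (Real.sqrt 2 - 1) / 2 - η - 75 * ν ≤ δ :=
  stmt8_general δ ν η ρ hρ hnsA hnsB A0 A1 B0 B1 hA hB hchsh hguess
end
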